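/- arXiv:1702.06861 — 4 statements merged into one kernel-verified Lean document; each statement's English description precedes it below -/
import Mathlib

section
/- Let X and Y be symmetric n×n real matrices with eigen-decompositions X = P_i Λ_i P_iᵀ + P_{n−i} Λ_{n−i} P_{n−i}ᵀ and Y = Q_j Ξ_j Q_jᵀ + Q_{n−j} Ξ_{n−j} Q_{n−j}ᵀ, where P_i collects eigenvectors for the top i eigenvalues of X and Q_{n−j} collects eigenvectors for the bottom n−j eigenvalues of Y. If σ_i(X) > σ_{j+1}(Y), then ‖Q_{n−j}ᵀ P_i‖₂ ≤ ‖X − Y‖₂ / (σ_i(X) − σ_{j+1}(Y)). -/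
open Matrix

noncomputable def frobNorm {n m : ℕ} (M : Matrix (Fin n) (Fin m) ℝ) : ℝ :=
  Real.sqrt (∑ i, ∑ j, (M i j) ^ 2)

noncomputable def specNorm {n m : ℕ} (M : Matrix (Fin n) (Fin m) ℝ) : ℝ :=
  sSup {r : ℝ | ∃ v : Fin m → ℝ, (∑ j, (v j) ^ 2) = 1 ∧
    r = Real.sqrt (∑ i, (M.mulVec v i) ^ 2)}

namespace DKaux

lemma specNorm_nonneg {k m : ℕ} (M : Matrix (Fin k) (Fin m) ℝ) : 0 ≤ specNorm M :=
  Real.sSup_nonneg (by rintro r ⟨v, -, rfl⟩; exact Real.sqrt_nonneg _)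

lemma norm_mulVec_le_frob {k m : ℕ} (M : Matrix (Fin k) (Fin m) ℝ) (v : Fin m → ℝ)
    (hv : (∑ j, (v j) ^ 2) = 1) :
    Real.sqrt (∑ a, (M.mulVec v a) ^ 2) ≤ frobNorm M := by
  unfold frobNorm
  apply Real.sqrt_le_sqrt
  refine Finset.sum_le_sum fun a _ => ?_
  have := Finset.sum_mul_sq_le_sq_mul_sq Finset.univ (fun b => M a b) v
  simpa [Matrix.mulVec, dotProduct, hv] using this

lemma bddAbove_set {k m : ℕ} (M : Matrix (Fin k) (Fin m) ℝ) :
    BddAbove {r : ℝ | ∃ v : Fin m → ℝ, (∑ j, (v j) ^ 2) = 1 ∧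
      r = Real.sqrt (∑ a, (M.mulVec v a) ^ 2)} :=
  ⟨frobNorm M, by rintro r ⟨v, hv, rfl⟩; exact norm_mulVec_le_frob M v hv⟩

lemma le_specNorm {k m : ℕ} (M : Matrix (Fin k) (Fin m) ℝ) (v : Fin m → ℝ)
    (hv : (∑ j, (v j) ^ 2) = 1) :
    Real.sqrt (∑ a, (M.mulVec v a) ^ 2) ≤ specNorm M :=
  le_csSup (bddAbove_set M) ⟨v, hv, rfl⟩

lemma exists_max {k m : ℕ} (M : Matrix (Fin k) (Fin m) ℝ) (hm : 0 < m) :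
    ∃ v : Fin m → ℝ, (∑ j, (v j) ^ 2) = 1 ∧
      Real.sqrt (∑ a, (M.mulVec v a) ^ 2) = specNorm M := by
  set S : Set (Fin m → ℝ) := {v | (∑ j, (v j) ^ 2) = 1} with hS
  have hSne : S.Nonempty := by
    refine ⟨fun b => if b = ⟨0, hm⟩ then 1 else 0, ?_⟩
    simp [hS, apply_ite (· ^ (2:ℕ))]
  have hcont : Continuous fun v : Fin m → ℝ => ∑ j, (v j) ^ 2 := by
    apply continuous_finset_sum
    intro j _
    exact (continuous_apply j).pow 2
  have hSclosed : IsClosed S := isClosed_eq hcont continuous_const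
  have hSbdd : Bornology.IsBounded S := by
    rw [Metric.isBounded_iff_subset_closedBall 0]
    refine ⟨1, fun v hv => ?_⟩
    simp only [Metric.mem_closedBall, dist_zero_right]
    rw [pi_norm_le_iff_of_nonneg zero_le_one]
    intro b
    have h1 : (v b) ^ 2 ≤ 1 := by
      have := Finset.single_le_sum (f := fun j => (v j) ^ 2)
        (fun c _ => sq_nonneg _) (Finset.mem_univ b)
      calc (v b) ^ 2 ≤ ∑ j, (v j) ^ 2 := this
        _ = 1 := hv
    rw [Real.norm_eq_abs, abs_le]
    constructor <;> nlinarith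
  have hScompact : IsCompact S := Metric.isCompact_of_isClosed_isBounded hSclosed hSbdd
  have hgcont : Continuous fun v : Fin m → ℝ => Real.sqrt (∑ a, (M.mulVec v a) ^ 2) := by
    apply Continuous.sqrt
    apply continuous_finset_sum
    intro a _
    have : Continuous fun v : Fin m → ℝ => M.mulVec v a := by
      simp only [Matrix.mulVec, dotProduct]
      exact continuous_finset_sum _ fun b _ => (continuous_const.mul (continuous_apply b))
    exact this.pow 2
  have himg : {r : ℝ | ∃ v : Fin m → ℝ, (∑ j, (v j) ^ 2) = 1 ∧
      r = Real.sqrt (∑ a, (M.mulVec v a) ^ 2)} =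
      (fun v : Fin m → ℝ => Real.sqrt (∑ a, (M.mulVec v a) ^ 2)) '' S := by
    ext r
    constructor
    · rintro ⟨v, hv, rfl⟩; exact ⟨v, hv, rfl⟩
    · rintro ⟨v, hv, rfl⟩; exact ⟨v, hv, rfl⟩
  have hmem : specNorm M ∈ (fun v : Fin m → ℝ =>
      Real.sqrt (∑ a, (M.mulVec v a) ^ 2)) '' S := by
    rw [specNorm, himg]
    exact (hScompact.image hgcont).sSup_mem (hSne.image _)
  obtain ⟨v, hv, hveq⟩ := hmem
  exact ⟨v, hv, hveq⟩

lemma psd_kernel {k : ℕ} (B : Matrix (Fin k) (Fin k) ℝ) (hB : Bᵀ = B)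
    (hpsd : ∀ x : Fin k → ℝ, 0 ≤ x ⬝ᵥ B.mulVec x)
    (v : Fin k → ℝ) (hv : v ⬝ᵥ B.mulVec v = 0) : B.mulVec v = 0 := by
  have hsym : ∀ x y : Fin k → ℝ, x ⬝ᵥ B.mulVec y = y ⬝ᵥ B.mulVec x := by
    intro x y
    rw [Matrix.dotProduct_mulVec, ← hB, Matrix.vecMul_transpose, dotProduct_comm, hB]
  set w := B.mulVec v with hw
  set c := w ⬝ᵥ w with hc
  set d := w ⬝ᵥ B.mulVec w with hd
  have hd0 : 0 ≤ d := hpsd w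
  have key : ∀ t : ℝ, 0 ≤ 2 * t * c + t ^ 2 * d := by
    intro t
    have h0 := hpsd (v + t • w)
    have e1 : v ⬝ᵥ B.mulVec w = c := by rw [hsym]
    have e2 : w ⬝ᵥ B.mulVec v = c := by rw [hc, ← hw]
    have expand : (v + t • w) ⬝ᵥ B.mulVec (v + t • w) =
        v ⬝ᵥ B.mulVec v + t * (w ⬝ᵥ B.mulVec v) + t * (v ⬝ᵥ B.mulVec w) + t ^ 2 * d := by
      simp only [Matrix.mulVec_add, Matrix.mulVec_smul, add_dotProduct,
        dotProduct_add, smul_dotProduct, dotProduct_smul,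
        smul_eq_mul, hd]
      ring
    rw [expand, hv, e1, e2] at h0
    linarith
  have hc0 : 0 ≤ c := by
    rw [hc, dotProduct]
    exact Finset.sum_nonneg fun a _ => mul_self_nonneg _
  have hczero : c = 0 := by
    by_contra hne
    have hcpos : 0 < c := lt_of_le_of_ne hc0 (Ne.symm hne)
    have hd1 : (0:ℝ) < d + 1 := by linarith
    have := key (-(c / (d + 1)))
    have hexp : 2 * (-(c / (d + 1))) * c + (-(c / (d + 1))) ^ 2 * d =
        -(c ^ 2 * (d + 2)) / (d + 1) ^ 2 := by
      field_simp
      ring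
    rw [hexp] at this
    have hnum : 0 < c ^ 2 * (d + 2) / (d + 1) ^ 2 := by positivity
    rw [neg_div] at this
    linarith
  funext a
  have : ∑ b, w b * w b = 0 := by rw [← dotProduct, ← hc, hczero]
  have hall := (Finset.sum_eq_zero_iff_of_nonneg
    (fun b (_ : b ∈ Finset.univ) => mul_self_nonneg (w b))).mp this a (Finset.mem_univ a)
  have : w a = 0 := by nlinarith [hall]
  simpa using this

lemma dot_self_eq_sum_sq {m : ℕ} (x : Fin m → ℝ) : x ⬝ᵥ x = ∑ j, (x j) ^ 2 := by
  simp [dotProduct, sq]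

lemma dot_MtM {k m : ℕ} (M : Matrix (Fin k) (Fin m) ℝ) (x y : Fin m → ℝ) :
    x ⬝ᵥ (Mᵀ * M).mulVec y = M.mulVec x ⬝ᵥ M.mulVec y := by
  rw [← Matrix.mulVec_mulVec, Matrix.dotProduct_mulVec, Matrix.vecMul_transpose]

lemma quad_le {k m : ℕ} (M : Matrix (Fin k) (Fin m) ℝ) (x : Fin m → ℝ) :
    (∑ a, (M.mulVec x a) ^ 2) ≤ specNorm M ^ 2 * ∑ j, (x j) ^ 2 := by
  rcases eq_or_ne (∑ j, (x j) ^ 2) 0 with hx | hx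
  · have hx0 : x = 0 := by
      funext b
      have := (Finset.sum_eq_zero_iff_of_nonneg
        (fun c (_ : c ∈ Finset.univ) => sq_nonneg (x c))).mp hx b (Finset.mem_univ b)
      exact pow_eq_zero_iff (n := 2) (by norm_num) |>.mp this
    subst hx0
    simp [Matrix.mulVec_zero]
  · have hpos : 0 < ∑ j, (x j) ^ 2 :=
      lt_of_le_of_ne (Finset.sum_nonneg fun c _ => sq_nonneg _) (Ne.symm hx)
    set s : ℝ := Real.sqrt (∑ j, (x j) ^ 2) with hs
    have hspos : 0 < s := Real.sqrt_pos.mpr hpos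
    have hs2 : s ^ 2 = ∑ j, (x j) ^ 2 := Real.sq_sqrt hpos.le
    set u : Fin m → ℝ := s⁻¹ • x with hu
    have hu1 : (∑ j, (u j) ^ 2) = 1 := by
      simp only [hu, Pi.smul_apply, smul_eq_mul, mul_pow, ← Finset.mul_sum]
      rw [← hs2]
      field_simp
    have hMu : M.mulVec u = s⁻¹ • M.mulVec x := by
      rw [hu, Matrix.mulVec_smul]
    have hle := le_specNorm M u hu1
    have hsum_le : (∑ a, (M.mulVec u a) ^ 2) ≤ specNorm M ^ 2 := by
      have h1 : (∑ a, (M.mulVec u a) ^ 2) = Real.sqrt (∑ a, (M.mulVec u a) ^ 2) ^ 2 :=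
        (Real.sq_sqrt (Finset.sum_nonneg fun a _ => sq_nonneg _)).symm
      rw [h1]
      exact pow_le_pow_left₀ (Real.sqrt_nonneg _) hle 2
    have hrw : (∑ a, (M.mulVec u a) ^ 2) = s⁻¹ ^ 2 * ∑ a, (M.mulVec x a) ^ 2 := by
      simp only [hMu, Pi.smul_apply, smul_eq_mul, mul_pow, ← Finset.mul_sum]
    rw [hrw] at hsum_le
    have : (∑ a, (M.mulVec x a) ^ 2) ≤ specNorm M ^ 2 * s ^ 2 := by
      have := mul_le_mul_of_nonneg_left hsum_le (sq_nonneg s)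
      calc (∑ a, (M.mulVec x a) ^ 2)
          = s ^ 2 * (s⁻¹ ^ 2 * ∑ a, (M.mulVec x a) ^ 2) := by
            field_simp
        _ ≤ s ^ 2 * specNorm M ^ 2 := this
        _ = specNorm M ^ 2 * s ^ 2 := by ring
    rwa [hs2] at this

lemma exists_singular {k m : ℕ} (M : Matrix (Fin k) (Fin m) ℝ) (hm : 0 < m) :
    ∃ v : Fin m → ℝ, (∑ j, (v j) ^ 2) = 1 ∧
      Mᵀ.mulVec (M.mulVec v) = specNorm M ^ 2 • v := by
  obtain ⟨v, hv1, hv2⟩ := exists_max M hm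
  refine ⟨v, hv1, ?_⟩
  set σ := specNorm M with hσ
  have hMv2 : (∑ a, (M.mulVec v a) ^ 2) = σ ^ 2 := by
    rw [← hv2, Real.sq_sqrt (Finset.sum_nonneg fun a _ => sq_nonneg _)]
  set B : Matrix (Fin m) (Fin m) ℝ := σ ^ 2 • 1 - Mᵀ * M with hB
  have hBsym : Bᵀ = B := by
    rw [hB, Matrix.transpose_sub, Matrix.transpose_smul, Matrix.transpose_one,
      Matrix.transpose_mul, Matrix.transpose_transpose]
  have hBmul : ∀ x : Fin m → ℝ, B.mulVec x = σ ^ 2 • x - Mᵀ.mulVec (M.mulVec x) := by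
    intro x
    rw [hB, Matrix.sub_mulVec, Matrix.smul_mulVec, Matrix.one_mulVec,
      ← Matrix.mulVec_mulVec]
  have hpsd : ∀ x : Fin m → ℝ, 0 ≤ x ⬝ᵥ B.mulVec x := by
    intro x
    rw [hBmul, dotProduct_sub, dotProduct_smul, smul_eq_mul,
      dot_self_eq_sum_sq]
    have h2 : x ⬝ᵥ Mᵀ.mulVec (M.mulVec x) = ∑ a, (M.mulVec x a) ^ 2 := by
      rw [Matrix.mulVec_mulVec, dot_MtM, dot_self_eq_sum_sq]
    rw [h2]
    have := quad_le M x
    linarith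
  have hv0 : v ⬝ᵥ B.mulVec v = 0 := by
    rw [hBmul, dotProduct_sub, dotProduct_smul, smul_eq_mul,
      dot_self_eq_sum_sq, hv1]
    have h2 : v ⬝ᵥ Mᵀ.mulVec (M.mulVec v) = ∑ a, (M.mulVec v a) ^ 2 := by
      rw [Matrix.mulVec_mulVec, dot_MtM, dot_self_eq_sum_sq]
    rw [h2, hMv2]
    ring
  have hker := psd_kernel B hBsym hpsd v hv0
  rw [hBmul] at hker
  have := sub_eq_zero.mp hker
  exact this.symm

lemma spectral_mulVec {n : ℕ} (σ : Fin n → ℝ) (p : Fin n → Fin n → ℝ)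
    (hp : ∀ a b, p a ⬝ᵥ p b = if a = b then (1:ℝ) else 0) (l : Fin n) :
    (∑ l', σ l' • Matrix.vecMulVec (p l') (p l')) *ᵥ p l = σ l • p l := by
  funext c
  have h1 : ((∑ l', σ l' • Matrix.vecMulVec (p l') (p l')) *ᵥ p l) c
      = ∑ l', σ l' * (p l' c * (p l' ⬝ᵥ p l)) := by
    simp only [Matrix.mulVec, dotProduct, Matrix.sum_apply, Matrix.smul_apply,
      Matrix.vecMulVec_apply, smul_eq_mul, Finset.sum_mul, Finset.mul_sum]
    rw [Finset.sum_comm]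
    exact Finset.sum_congr rfl fun l' _ => Finset.sum_congr rfl fun d _ => by ring
  rw [h1]
  rw [Finset.sum_eq_single l (fun l' _ hne => by rw [hp, if_neg hne]; ring)
    (fun h => absurd (Finset.mem_univ l) h)]
  rw [hp, if_pos rfl]
  simp

lemma mulVec_lincomb {n k : ℕ} (X : Matrix (Fin n) (Fin n) ℝ) (f : Fin k → Fin n → ℝ)
    (co : Fin k → ℝ) :
    X *ᵥ (fun d => ∑ b, co b * f b d) = fun e => ∑ b, co b * (X *ᵥ f b) e := by
  funext e
  simp only [Matrix.mulVec, dotProduct, Finset.mul_sum]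
  rw [Finset.sum_comm]
  exact Finset.sum_congr rfl fun b _ => Finset.sum_congr rfl fun d _ => by ring

lemma lincomb_dot {n k : ℕ} (f : Fin k → Fin n → ℝ) (co : Fin k → ℝ) (w : Fin n → ℝ) :
    (fun d => ∑ b, co b * f b d) ⬝ᵥ w = ∑ b, co b * (f b ⬝ᵥ w) := by
  simp only [dotProduct, Finset.mul_sum, Finset.sum_mul]
  rw [Finset.sum_comm]
  exact Finset.sum_congr rfl fun b _ => Finset.sum_congr rfl fun d _ => by ring

end DKaux

open DKaux in
/-- Asymmetric Davis–Kahan inequality. -/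
theorem stmt1 {n : ℕ} (i j : ℕ) (hi1 : 1 ≤ i) (hij : i ≤ j) (hj : j < n)
    (X Y : Matrix (Fin n) (Fin n) ℝ)
    (σX σY : Fin n → ℝ) (p q : Fin n → Fin n → ℝ)
    (hσX : Antitone σX) (hσY : Antitone σY)
    (hp : ∀ a b, p a ⬝ᵥ p b = if a = b then (1 : ℝ) else 0)
    (hq : ∀ a b, q a ⬝ᵥ q b = if a = b then (1 : ℝ) else 0)
    (hXd : X = ∑ l, σX l • Matrix.vecMulVec (p l) (p l))
    (hYd : Y = ∑ l, σY l • Matrix.vecMulVec (q l) (q l))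
    (hgap : σY ⟨j, hj⟩ < σX ⟨i - 1, by omega⟩) :
    specNorm ((Matrix.of fun (a : Fin n) (b : Fin (n - j)) =>
        q ⟨j + (b : ℕ), by have := b.isLt; omega⟩ a)ᵀ *
      (Matrix.of fun (a : Fin n) (b : Fin i) => p ⟨(b : ℕ), by have := b.isLt; omega⟩ a)) ≤
      specNorm (X - Y) / (σX ⟨i - 1, by omega⟩ - σY ⟨j, hj⟩) := by
  have hbn : ∀ b : Fin i, (b : ℕ) < n := fun b => by have := b.isLt; omega
  have han : ∀ a : Fin (n - j), j + (a : ℕ) < n := fun a => by have := a.isLt; omega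
  have hii : i - 1 < n := by omega
  set M : Matrix (Fin (n - j)) (Fin i) ℝ :=
    (Matrix.of fun (a : Fin n) (b : Fin (n - j)) =>
        q ⟨j + (b : ℕ), by have := b.isLt; omega⟩ a)ᵀ *
      (Matrix.of fun (a : Fin n) (b : Fin i) => p ⟨(b : ℕ), by have := b.isLt; omega⟩ a)
    with hMdef
  have hδ : 0 < σX ⟨i - 1, hii⟩ - σY ⟨j, hj⟩ := sub_pos.2 hgap
  rw [le_div_iff₀ hδ]
  set σ := specNorm M with hσdef
  have hσ0 : 0 ≤ σ := specNorm_nonneg M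
  rcases eq_or_lt_of_le hσ0 with h0 | hσpos
  · rw [← h0, zero_mul]; exact specNorm_nonneg _
  have hσne : σ ≠ 0 := ne_of_gt hσpos
  obtain ⟨v, hv1, hv3⟩ := exists_singular M (by omega : 0 < i)
  rw [← hσdef] at hv3
  have hMv2 : M.mulVec v ⬝ᵥ M.mulVec v = σ ^ 2 := by
    rw [← dot_MtM M v v, ← Matrix.mulVec_mulVec, hv3, dotProduct_smul, smul_eq_mul,
      dot_self_eq_sum_sq, hv1, mul_one]
  set u : Fin (n - j) → ℝ := σ⁻¹ • M.mulVec v with hu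
  have hMv : M.mulVec v = σ • u := by
    rw [hu, smul_smul, mul_inv_cancel₀ hσne, one_smul]
  have hu1 : (∑ a, (u a) ^ 2) = 1 := by
    rw [← dot_self_eq_sum_sq, hu, smul_dotProduct, dotProduct_smul, hMv2,
      smul_eq_mul, smul_eq_mul, sq]
    field_simp
  have hMTu : Mᵀ.mulVec u = σ • v := by
    rw [hu, Matrix.mulVec_smul, hv3, smul_smul, sq, ← mul_assoc, inv_mul_cancel₀ hσne,
      one_mul]
  have hp' : ∀ b b' : Fin i,
      p ⟨(b : ℕ), hbn b⟩ ⬝ᵥ p ⟨(b' : ℕ), hbn b'⟩ = if b = b' then (1:ℝ) else 0 := by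
    intro b b'
    rw [hp]
    by_cases h : b = b'
    · subst h; simp
    · rw [if_neg h, if_neg]
      intro hcon
      exact h (Fin.ext (by simpa using congrArg Fin.val hcon))
  have hq' : ∀ a a' : Fin (n - j),
      q ⟨j + (a : ℕ), han a⟩ ⬝ᵥ q ⟨j + (a' : ℕ), han a'⟩ = if a = a' then (1:ℝ) else 0 := by
    intro a a'
    rw [hq]
    by_cases h : a = a'
    · subst h; simp
    · rw [if_neg h, if_neg]
      intro hcon
      have := congrArg Fin.val hcon
      simp only [] at this
      exact h (Fin.ext (by omega))
  have hMab : ∀ (a : Fin (n - j)) (b : Fin i),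
      M a b = q ⟨j + (a : ℕ), han a⟩ ⬝ᵥ p ⟨(b : ℕ), hbn b⟩ := by
    intro a b
    rw [hMdef]
    simp [Matrix.mul_apply, dotProduct]
  have hXp : ∀ l, X *ᵥ p l = σX l • p l := fun l => by
    rw [hXd]; exact spectral_mulVec σX p hp l
  have hYq : ∀ l, Y *ᵥ q l = σY l • q l := fun l => by
    rw [hYd]; exact spectral_mulVec σY q hq l
  set pv : Fin n → ℝ := fun c => ∑ b, v b * p ⟨(b : ℕ), hbn b⟩ c with hpv
  set qu : Fin n → ℝ := fun c => ∑ a, u a * q ⟨j + (a : ℕ), han a⟩ c with hqu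
  have hqup : ∀ b : Fin i, qu ⬝ᵥ p ⟨(b : ℕ), hbn b⟩ = σ * v b := by
    intro b
    rw [hqu, lincomb_dot]
    calc ∑ a, u a * (q ⟨j + (a : ℕ), han a⟩ ⬝ᵥ p ⟨(b : ℕ), hbn b⟩)
        = ∑ a, Mᵀ b a * u a :=
          Finset.sum_congr rfl fun a _ => by
            rw [← hMab, Matrix.transpose_apply]; ring
      _ = Mᵀ.mulVec u b := rfl
      _ = σ * v b := by rw [hMTu]; simp
  have hpvq : ∀ a : Fin (n - j), pv ⬝ᵥ q ⟨j + (a : ℕ), han a⟩ = σ * u a := by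
    intro a
    rw [hpv, lincomb_dot]
    calc ∑ b, v b * (p ⟨(b : ℕ), hbn b⟩ ⬝ᵥ q ⟨j + (a : ℕ), han a⟩)
        = ∑ b, M a b * v b :=
          Finset.sum_congr rfl fun b _ => by
            rw [dotProduct_comm, ← hMab]; ring
      _ = M.mulVec v a := rfl
      _ = σ * u a := by rw [hMv]; simp
  have hppv : ∀ b : Fin i,
      p ⟨(b : ℕ), hbn b⟩ ⬝ᵥ (fun c => ∑ b', v b' * p ⟨(b' : ℕ), hbn b'⟩ c) = v b := by
    intro b
    rw [dotProduct_comm, lincomb_dot]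
    rw [Finset.sum_eq_single b (fun b' _ hne => by rw [hp', if_neg hne, mul_zero])
      (fun h => absurd (Finset.mem_univ b) h)]
    rw [hp', if_pos rfl, mul_one]
  have hqqu : ∀ a : Fin (n - j),
      q ⟨j + (a : ℕ), han a⟩ ⬝ᵥ (fun c => ∑ a', u a' * q ⟨j + (a' : ℕ), han a'⟩ c) = u a := by
    intro a
    rw [dotProduct_comm, lincomb_dot]
    rw [Finset.sum_eq_single a (fun a' _ hne => by rw [hq', if_neg hne, mul_zero])
      (fun h => absurd (Finset.mem_univ a) h)]
    rw [hq', if_pos rfl, mul_one]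
  have hpv1 : (∑ c, (pv c) ^ 2) = 1 := by
    rw [← dot_self_eq_sum_sq, hpv, lincomb_dot]
    simp only [hppv]
    rw [← hv1]
    exact Finset.sum_congr rfl fun b _ => (pow_two (v b)).symm
  have hqu1 : (∑ c, (qu c) ^ 2) = 1 := by
    rw [← dot_self_eq_sum_sq, hqu, lincomb_dot]
    simp only [hqqu]
    rw [← hu1]
    exact Finset.sum_congr rfl fun a _ => (pow_two (u a)).symm
  have hXpv : X *ᵥ pv =
      fun e => ∑ b, (v b * σX ⟨(b : ℕ), hbn b⟩) * p ⟨(b : ℕ), hbn b⟩ e := by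
    rw [hpv, mulVec_lincomb]
    funext e
    refine Finset.sum_congr rfl fun b _ => ?_
    rw [hXp ⟨(b : ℕ), hbn b⟩]
    simp only [Pi.smul_apply, smul_eq_mul]
    ring
  have hYqu : Y *ᵥ qu =
      fun e => ∑ a, (u a * σY ⟨j + (a : ℕ), han a⟩) * q ⟨j + (a : ℕ), han a⟩ e := by
    rw [hqu, mulVec_lincomb]
    funext e
    refine Finset.sum_congr rfl fun a _ => ?_
    rw [hYq ⟨j + (a : ℕ), han a⟩]
    simp only [Pi.smul_apply, smul_eq_mul]
    ring
  have hS1 : qu ⬝ᵥ (X *ᵥ pv) = σ * ∑ b : Fin i, σX ⟨(b : ℕ), hbn b⟩ * (v b) ^ 2 := by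
    rw [dotProduct_comm, hXpv, lincomb_dot, Finset.mul_sum]
    refine Finset.sum_congr rfl fun b _ => ?_
    rw [dotProduct_comm, hqup b]
    ring
  have hYsymm : Yᵀ = Y := by
    rw [hYd]
    ext c d
    simp only [Matrix.transpose_apply, Matrix.sum_apply, Matrix.smul_apply,
      Matrix.vecMulVec_apply, smul_eq_mul]
    exact Finset.sum_congr rfl fun l _ => by ring
  have hS2 : qu ⬝ᵥ (Y *ᵥ pv) = σ * ∑ a : Fin (n - j), σY ⟨j + (a : ℕ), han a⟩ * (u a) ^ 2 := by
    rw [Matrix.dotProduct_mulVec]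
    have hvm : qu ᵥ* Y = Y *ᵥ qu := by
      conv_lhs => rw [← hYsymm]
      rw [Matrix.vecMul_transpose]
    rw [hvm, hYqu, lincomb_dot, Finset.mul_sum]
    refine Finset.sum_congr rfl fun a _ => ?_
    rw [dotProduct_comm, hpvq a]
    ring
  have hS1ge : σ * σX ⟨i - 1, hii⟩ ≤ qu ⬝ᵥ (X *ᵥ pv) := by
    rw [hS1]
    have hsum : σX ⟨i - 1, hii⟩ * 1 ≤ ∑ b : Fin i, σX ⟨(b : ℕ), hbn b⟩ * (v b) ^ 2 := by
      rw [← hv1, Finset.mul_sum]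
      refine Finset.sum_le_sum fun b _ => ?_
      refine mul_le_mul_of_nonneg_right (hσX ?_) (sq_nonneg _)
      have hb := b.isLt
      simp only [Fin.mk_le_mk]
      omega
    calc σ * σX ⟨i - 1, hii⟩ = σ * (σX ⟨i - 1, hii⟩ * 1) := by ring
      _ ≤ σ * ∑ b : Fin i, σX ⟨(b : ℕ), hbn b⟩ * (v b) ^ 2 :=
          mul_le_mul_of_nonneg_left hsum hσ0
  have hS2le : qu ⬝ᵥ (Y *ᵥ pv) ≤ σ * σY ⟨j, hj⟩ := by
    rw [hS2]
    have hsum : ∑ a : Fin (n - j), σY ⟨j + (a : ℕ), han a⟩ * (u a) ^ 2 ≤ σY ⟨j, hj⟩ * 1 := by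
      rw [← hu1, Finset.mul_sum]
      refine Finset.sum_le_sum fun a _ => ?_
      refine mul_le_mul_of_nonneg_right (hσY ?_) (sq_nonneg _)
      simp only [Fin.mk_le_mk]
      omega
    calc σ * ∑ a : Fin (n - j), σY ⟨j + (a : ℕ), han a⟩ * (u a) ^ 2
        ≤ σ * (σY ⟨j, hj⟩ * 1) := mul_le_mul_of_nonneg_left hsum hσ0
      _ = σ * σY ⟨j, hj⟩ := by ring
  have hmain : σ * (σX ⟨i - 1, hii⟩ - σY ⟨j, hj⟩) ≤ qu ⬝ᵥ ((X - Y) *ᵥ pv) := by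
    rw [Matrix.sub_mulVec, dotProduct_sub, mul_sub]
    exact sub_le_sub hS1ge hS2le
  have hub : qu ⬝ᵥ ((X - Y) *ᵥ pv) ≤ specNorm (X - Y) := by
    have cs := Real.sum_mul_le_sqrt_mul_sqrt Finset.univ qu ((X - Y) *ᵥ pv)
    rw [hqu1, Real.sqrt_one, one_mul] at cs
    have hdp : qu ⬝ᵥ ((X - Y) *ᵥ pv) = ∑ c, qu c * ((X - Y) *ᵥ pv) c := rfl
    rw [hdp]
    exact cs.trans (le_specNorm (X - Y) pv hpv1)
  exact hmain.trans hub
end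

section
/- Let X be a symmetric n×n real matrix, P an n×m matrix with PᵀP = I (n ≥ m), and Y = Pᵀ X P. Then for all i = 1, …, m: σ_i(X) ≥ σ_i(Y) ≥ σ_{n−m+i}(X), where eigenvalues are listed in descending order. -/
open Matrix

theorem exists_ker {a b : ℕ} (hba : b < a) (d : Fin a → Fin b → ℝ) :
    ∃ c : Fin a → ℝ, c ≠ 0 ∧ ∀ j, ∑ l, c l * d l j = 0 := by
  set f : (Fin a → ℝ) →ₗ[ℝ] (Fin b → ℝ) := (Matrix.of fun j l => d l j).mulVecLin with hf
  have hker : LinearMap.ker f ≠ ⊥ := by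
    intro h
    have hinj : Function.Injective f := LinearMap.ker_eq_bot.mp h
    have := LinearMap.finrank_le_finrank_of_injective hinj
    simp [Module.finrank_fintype_fun_eq_card] at this
    omega
  obtain ⟨c, hc, hc0⟩ := Submodule.ne_bot_iff _ |>.mp hker
  refine ⟨c, hc0, fun j => ?_⟩
  have := congrFun (LinearMap.mem_ker.mp hc) j
  simpa [hf, Matrix.mulVecLin, Matrix.mulVec, dotProduct, mul_comm] using this

theorem dot_sum_smul {N k : ℕ} (x : Fin N → ℝ) (c : Fin k → ℝ) (w : Fin k → Fin N → ℝ) :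
    x ⬝ᵥ (∑ l, c l • w l) = ∑ l, c l * (x ⬝ᵥ w l) := by
  simp only [dotProduct, Finset.sum_apply, Pi.smul_apply, smul_eq_mul, Finset.mul_sum]
  rw [Finset.sum_comm]
  exact Finset.sum_congr rfl fun l _ => by
    exact Finset.sum_congr rfl fun j _ => by ring

theorem mulVec_sum_smul {n m k : ℕ} (P : Matrix (Fin n) (Fin m) ℝ) (c : Fin k → ℝ)
    (w : Fin k → Fin m → ℝ) :
    P *ᵥ (∑ l, c l • w l) = ∑ l, c l • (P *ᵥ w l) := by
  simp only [← Matrix.mulVecLin_apply, map_sum, _root_.map_smul]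

theorem ortho_complete {k : ℕ} (u : Fin k → Fin k → ℝ)
    (hu : ∀ a b, u a ⬝ᵥ u b = if a = b then (1:ℝ) else 0) (w : Fin k → ℝ) :
    ∑ l, (u l ⬝ᵥ w)^2 = w ⬝ᵥ w := by
  set U : Matrix (Fin k) (Fin k) ℝ := Matrix.of u with hU
  have h1 : U * Uᵀ = 1 := by
    ext a b; simpa [hU, Matrix.of_apply, Matrix.mul_apply, Matrix.one_apply, dotProduct] using hu a b
  have h2 : Uᵀ * U = 1 := mul_eq_one_comm.mp h1
  have key : w ⬝ᵥ ((Uᵀ * U) *ᵥ w) = (U *ᵥ w) ⬝ᵥ (U *ᵥ w) := by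
    rw [← Matrix.mulVec_mulVec, Matrix.dotProduct_mulVec, Matrix.vecMul_transpose]
  have lhs : ∑ l, (u l ⬝ᵥ w)^2 = (U *ᵥ w) ⬝ᵥ (U *ᵥ w) := by
    simp [dotProduct, Matrix.mulVec, sq, hU]
  rw [lhs, ← key, h2, Matrix.one_mulVec]

theorem quadform {k N : ℕ} (σ : Fin k → ℝ) (u : Fin k → Fin N → ℝ) (w : Fin N → ℝ) :
    w ⬝ᵥ ((∑ l, σ l • Matrix.vecMulVec (u l) (u l)) *ᵥ w) = ∑ l, σ l * (u l ⬝ᵥ w)^2 := by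
  have h : (∑ l, σ l • Matrix.vecMulVec (u l) (u l)) *ᵥ w
      = ∑ l, (σ l * (u l ⬝ᵥ w)) • u l := by
    ext a
    simp only [Matrix.mulVec, dotProduct, Matrix.sum_apply, Matrix.smul_apply,
      Matrix.vecMulVec_apply, smul_eq_mul, Finset.sum_apply, Pi.smul_apply,
      Finset.sum_mul, Finset.mul_sum]
    rw [Finset.sum_comm]
    exact Finset.sum_congr rfl fun l _ => Finset.sum_congr rfl fun b _ => by ring
  rw [h]
  simp only [dotProduct, Finset.sum_apply, Pi.smul_apply, smul_eq_mul, Finset.mul_sum]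
  rw [Finset.sum_comm]
  refine Finset.sum_congr rfl fun l _ => ?_
  trans (σ l * (∑ i, u l i * w i)) * (∑ x, u l x * w x)
  · rw [Finset.mul_sum]
    exact Finset.sum_congr rfl fun a _ => by rw [← Finset.mul_sum]; ring
  · ring

theorem norm_pres {n m : ℕ} (P : Matrix (Fin n) (Fin m) ℝ) (hP : Pᵀ * P = 1)
    (v : Fin m → ℝ) : (P *ᵥ v) ⬝ᵥ (P *ᵥ v) = v ⬝ᵥ v := by
  rw [Matrix.dotProduct_mulVec, ← Matrix.mulVec_transpose, Matrix.mulVec_mulVec, hP,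
    Matrix.one_mulVec]

theorem quad_pres {n m : ℕ} (X : Matrix (Fin n) (Fin n) ℝ) (P : Matrix (Fin n) (Fin m) ℝ)
    (v : Fin m → ℝ) : v ⬝ᵥ ((Pᵀ * X * P) *ᵥ v) = (P *ᵥ v) ⬝ᵥ (X *ᵥ (P *ᵥ v)) := by
  rw [← Matrix.mulVec_mulVec, ← Matrix.mulVec_mulVec, Matrix.dotProduct_mulVec,
    Matrix.vecMul_transpose]

theorem construct {n m k k' : ℕ} (hk' : k' < k)
    (P : Matrix (Fin n) (Fin m) ℝ)
    (uY : Fin m → Fin m → ℝ)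
    (huY : ∀ a b, uY a ⬝ᵥ uY b = if a = b then (1:ℝ) else 0)
    (uX : Fin n → Fin n → ℝ)
    (e : Fin k → Fin m) (he : Function.Injective e)
    (E : Fin k' → Fin n) :
    ∃ v : Fin m → ℝ, 0 < v ⬝ᵥ v ∧
      (∀ a : Fin m, (∀ l, e l ≠ a) → uY a ⬝ᵥ v = 0) ∧
      (∀ j : Fin k', uX (E j) ⬝ᵥ (P *ᵥ v) = 0) := by
  obtain ⟨c, hc0, hcj⟩ := exists_ker hk' (fun l j => uX (E j) ⬝ᵥ (P *ᵥ uY (e l)))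
  refine ⟨∑ l, c l • uY (e l), ?_, ?_, ?_⟩
  · obtain ⟨l0, hl0⟩ := Function.ne_iff.mp hc0
    have hval : uY (e l0) ⬝ᵥ (∑ l, c l • uY (e l)) = c l0 := by
      rw [dot_sum_smul]
      simp only [huY, he.eq_iff, mul_ite, mul_one, mul_zero]
      simp
    have hpos : (0:ℝ) < (uY (e l0) ⬝ᵥ (∑ l, c l • uY (e l)))^2 := by
      rw [hval]
      have hne : c l0 ≠ 0 := by simpa using hl0
      exact lt_of_le_of_ne (sq_nonneg _) (Ne.symm (pow_ne_zero 2 hne))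
    refine lt_of_lt_of_le hpos ?_
    rw [← ortho_complete uY huY (∑ l, c l • uY (e l))]
    exact Finset.single_le_sum (f := fun a => (uY a ⬝ᵥ (∑ l, c l • uY (e l)))^2)
      (fun a _ => sq_nonneg _) (Finset.mem_univ _)
  · intro a ha
    rw [dot_sum_smul]
    apply Finset.sum_eq_zero
    intro l _
    have : (uY a ⬝ᵥ uY (e l)) = 0 := by
      rw [huY]; simp [(ha l).symm]
    simp [this]
  · intro j
    rw [mulVec_sum_smul, dot_sum_smul]
    exact hcj j

/-- Poincaré separation theorem. -/
theorem stmt4 {n m : ℕ} (hmn : m ≤ n)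
    (X : Matrix (Fin n) (Fin n) ℝ) (P : Matrix (Fin n) (Fin m) ℝ)
    (hX : X.IsSymm) (hP : Pᵀ * P = 1)
    (σX : Fin n → ℝ) (uX : Fin n → Fin n → ℝ)
    (hσX : Antitone σX)
    (huX : ∀ a b, uX a ⬝ᵥ uX b = if a = b then (1 : ℝ) else 0)
    (hXd : X = ∑ l, σX l • Matrix.vecMulVec (uX l) (uX l))
    (σY : Fin m → ℝ) (uY : Fin m → Fin m → ℝ)
    (hσY : Antitone σY)
    (huY : ∀ a b, uY a ⬝ᵥ uY b = if a = b then (1 : ℝ) else 0)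
    (hYd : Pᵀ * X * P = ∑ l, σY l • Matrix.vecMulVec (uY l) (uY l))
    (i : Fin m) :
    σY i ≤ σX (Fin.castLE hmn i) ∧
      σX ⟨n - m + (i : ℕ), by have := i.isLt; omega⟩ ≤ σY i := by
  have him := i.isLt
  constructor
  · -- part 1 : σY i ≤ σX i
    set e : Fin (i.val + 1) → Fin m := fun l => ⟨l.val, by omega⟩ with hedef
    have he : Function.Injective e := fun a b hab => by
      have := congrArg Fin.val hab; simp [hedef] at this; exact Fin.ext this
    set E : Fin i.val → Fin n := fun j => ⟨j.val, by omega⟩ with hEdef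
    obtain ⟨v, hv, hYzero, hXzero⟩ := construct (by omega) P uY huY uX e he E
    set w := P *ᵥ v with hwdef
    have hww : w ⬝ᵥ w = v ⬝ᵥ v := norm_pres P hP v
    have hQY := quadform σY uY v
    rw [← hYd] at hQY
    have hQX := quadform σX uX w
    rw [← hXd] at hQX
    have hQ : v ⬝ᵥ ((Pᵀ * X * P) *ᵥ v) = w ⬝ᵥ (X *ᵥ w) := quad_pres X P v
    have h1 : σY i * (v ⬝ᵥ v) ≤ ∑ l, σY l * (uY l ⬝ᵥ v)^2 := by
      rw [← ortho_complete uY huY v, Finset.mul_sum]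
      apply Finset.sum_le_sum
      intro l _
      by_cases hl : l.val ≤ i.val
      · exact mul_le_mul_of_nonneg_right
          (hσY (show l ≤ i by rw [Fin.le_def]; omega)) (sq_nonneg _)
      · have hz : uY l ⬝ᵥ v = 0 := hYzero l (fun l' hh => by
          have := congrArg Fin.val hh; simp [hedef] at this; omega)
        simp [hz]
    have h2 : ∑ j, σX j * (uX j ⬝ᵥ w)^2 ≤ σX (Fin.castLE hmn i) * (w ⬝ᵥ w) := by
      rw [← ortho_complete uX huX w, Finset.mul_sum]
      apply Finset.sum_le_sum
      intro j _
      by_cases hj : j.val < i.val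
      · have hEj : E ⟨j.val, hj⟩ = j := Fin.ext rfl
        have hz : uX j ⬝ᵥ w = 0 := by rw [← hEj]; exact hXzero ⟨j.val, hj⟩
        simp [hz]
      · exact mul_le_mul_of_nonneg_right
          (hσX (show Fin.castLE hmn i ≤ j by rw [Fin.le_def]; simp; omega)) (sq_nonneg _)
    have chain : σY i * (v ⬝ᵥ v) ≤ σX (Fin.castLE hmn i) * (v ⬝ᵥ v) := by
      calc σY i * (v ⬝ᵥ v) ≤ ∑ l, σY l * (uY l ⬝ᵥ v)^2 := h1
        _ = v ⬝ᵥ ((Pᵀ * X * P) *ᵥ v) := hQY.symm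
        _ = w ⬝ᵥ (X *ᵥ w) := hQ
        _ = ∑ j, σX j * (uX j ⬝ᵥ w)^2 := hQX
        _ ≤ σX (Fin.castLE hmn i) * (w ⬝ᵥ w) := h2
        _ = σX (Fin.castLE hmn i) * (v ⬝ᵥ v) := by rw [hww]
    exact (mul_le_mul_iff_of_pos_right hv).mp chain
  · -- part 2 : σX ⟨n-m+i⟩ ≤ σY i
    set e : Fin (m - i.val) → Fin m := fun l => ⟨i.val + l.val, by omega⟩ with hedef
    have he : Function.Injective e := fun a b hab => by
      have := congrArg Fin.val hab; simp [hedef] at this; exact Fin.ext (by omega)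
    set E : Fin (m - i.val - 1) → Fin n := fun j => ⟨n - m + i.val + 1 + j.val, by omega⟩
      with hEdef
    obtain ⟨v, hv, hYzero, hXzero⟩ := construct (by omega) P uY huY uX e he E
    set w := P *ᵥ v with hwdef
    have hww : w ⬝ᵥ w = v ⬝ᵥ v := norm_pres P hP v
    have hQY := quadform σY uY v
    rw [← hYd] at hQY
    have hQX := quadform σX uX w
    rw [← hXd] at hQX
    have hQ : v ⬝ᵥ ((Pᵀ * X * P) *ᵥ v) = w ⬝ᵥ (X *ᵥ w) := quad_pres X P v
    have h1 : σX ⟨n - m + (i : ℕ), by omega⟩ * (w ⬝ᵥ w) ≤ ∑ j, σX j * (uX j ⬝ᵥ w)^2 := by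
      rw [← ortho_complete uX huX w, Finset.mul_sum]
      apply Finset.sum_le_sum
      intro j _
      by_cases hj : n - m + i.val < j.val
      · have hjn := j.isLt
        have hEj : E ⟨j.val - (n - m + i.val + 1), by omega⟩ = j := Fin.ext (by simp [hEdef]; omega)
        have hz : uX j ⬝ᵥ w = 0 := by rw [← hEj]; exact hXzero _
        simp [hz]
      · exact mul_le_mul_of_nonneg_right
          (hσX (show j ≤ ⟨n - m + (i : ℕ), by omega⟩ by rw [Fin.le_def]; simp; omega))
          (sq_nonneg _)
    have h2 : ∑ l, σY l * (uY l ⬝ᵥ v)^2 ≤ σY i * (v ⬝ᵥ v) := by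
      rw [← ortho_complete uY huY v, Finset.mul_sum]
      apply Finset.sum_le_sum
      intro l _
      by_cases hl : l.val < i.val
      · have hz : uY l ⬝ᵥ v = 0 := hYzero l (fun l' hh => by
          have := congrArg Fin.val hh; simp [hedef] at this; omega)
        simp [hz]
      · exact mul_le_mul_of_nonneg_right
          (hσY (show i ≤ l by rw [Fin.le_def]; omega)) (sq_nonneg _)
    have chain : σX ⟨n - m + (i : ℕ), by omega⟩ * (v ⬝ᵥ v) ≤ σY i * (v ⬝ᵥ v) := by
      calc σX ⟨n - m + (i : ℕ), by omega⟩ * (v ⬝ᵥ v)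
          = σX ⟨n - m + (i : ℕ), by omega⟩ * (w ⬝ᵥ w) := by rw [hww]
        _ ≤ ∑ j, σX j * (uX j ⬝ᵥ w)^2 := h1
        _ = w ⬝ᵥ (X *ᵥ w) := hQX.symm
        _ = v ⬝ᵥ ((Pᵀ * X * P) *ᵥ v) := hQ.symm
        _ = ∑ l, σY l * (uY l ⬝ᵥ v)^2 := hQY
        _ ≤ σY i * (v ⬝ᵥ v) := h2
    exact (mul_le_mul_iff_of_pos_right hv).mp chain
end

section
/- Let A be an n×n symmetric PSD matrix and let m_1 ≤ k ≤ m_2 ≤ n. Suppose W ∈ ℝ^{n×(k−m_1)} has orthonormal columns with Range(W) contained in the span of the eigenvectors of A associated with eigenvalues σ_{m_1+1}(A), …, σ_{m_2}(A). Then ‖Wᵀ A W‖_F² ≥ Σ_{j=m_1+m_2−k+1}^{m_2} σ_j(A)². -/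
open Matrix

private lemma frob_eig' {r : ℕ} (M : Matrix (Fin r) (Fin r) ℝ) (hM : M.IsHermitian) :
    ∑ i, ∑ j, M i j ^ 2 = ∑ p, hM.eigenvalues p ^ 2 := by
  set V : Matrix (Fin r) (Fin r) ℝ := (hM.eigenvectorUnitary : Matrix (Fin r) (Fin r) ℝ) with hV
  have hV1 : star V * V = 1 := Unitary.star_mul_self_of_mem (hM.eigenvectorUnitary).2
  have hspec : M = V * Matrix.diagonal hM.eigenvalues * star V := by
    have := hM.spectral_theorem
    simpa using this
  have lhs : ∑ i, ∑ j, M i j ^ 2 = (M * M).trace := by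
    rw [Matrix.trace]
    simp only [Matrix.diag, Matrix.mul_apply]
    rw [Finset.sum_comm]
    congr 1; ext i; congr 1; ext j
    have : M j i = M i j := by
      have := congrFun (congrFun hM.symm j) i
      simpa [Matrix.conjTranspose_apply] using this
    rw [this]; ring
  have rhs : (M * M).trace = ∑ p, hM.eigenvalues p ^ 2 := by
    conv_lhs => rw [hspec]
    have : (V * Matrix.diagonal hM.eigenvalues * star V) * (V * Matrix.diagonal hM.eigenvalues * star V)
        = V * (Matrix.diagonal hM.eigenvalues * Matrix.diagonal hM.eigenvalues) * star V := by
      simp only [Matrix.mul_assoc]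
      rw [← Matrix.mul_assoc (star V) V, hV1, Matrix.one_mul]
    rw [this, Matrix.trace_mul_cycle, ← Matrix.mul_assoc, hV1, Matrix.one_mul,
      Matrix.diagonal_mul_diagonal, Matrix.trace_diagonal]
    exact Finset.sum_congr rfl fun p _ => (sq _).symm
  rw [lhs, rhs]

private lemma poincare_key {r n m2 : ℕ} (hrm : r ≤ m2) (hm : m2 ≤ n)
    (d : Fin n → ℝ) (hd : Antitone d) (hd0 : ∀ l, 0 ≤ d l)
    (C : Matrix (Fin n) (Fin r) ℝ) (hC : Cᵀ * C = 1)
    (hsup : ∀ (l : Fin n) (j : Fin r), m2 ≤ (l : ℕ) → C l j = 0)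
    (hM : (Cᵀ * Matrix.diagonal d * C).IsHermitian) (i : Fin r) :
    d ⟨m2 - 1 - (i : ℕ), by omega⟩ ≤ hM.eigenvalues (Tuple.sort hM.eigenvalues i) := by
  have hi := i.isLt
  set M : Matrix (Fin r) (Fin r) ℝ := Cᵀ * Matrix.diagonal d * C with hMdef
  set lam := hM.eigenvalues with hlam
  set π := Tuple.sort lam with hπ
  have hμ : Monotone (lam ∘ π) := Tuple.monotone_sort lam
  set V : Matrix (Fin r) (Fin r) ℝ := (hM.eigenvectorUnitary : Matrix (Fin r) (Fin r) ℝ) with hV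
  have hV1 : star V * V = 1 := Unitary.star_mul_self_of_mem (hM.eigenvectorUnitary).2
  have hV2 : V * star V = 1 := Unitary.mul_star_self_of_mem (hM.eigenvectorUnitary).2
  have hsV : star V = Vᵀ := by
    ext a b; simp [Matrix.star_apply]
  have hspec : M = V * Matrix.diagonal lam * star V := by
    have := hM.spectral_theorem
    simpa using this
  -- the constraint linear map
  set q : Fin n := ⟨m2 - 1 - (i : ℕ), by omega⟩ with hq
  let f1 : (Fin r → ℝ) →ₗ[ℝ] (Fin (i : ℕ) → ℝ) :=
    { toFun := fun x p => (C *ᵥ x) ⟨m2 - 1 - (i : ℕ) + 1 + (p : ℕ), by have := p.isLt; omega⟩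
      map_add' := by intro x y; funext p; simp [Matrix.mulVec_add]
      map_smul' := by intro c x; funext p; simp [Matrix.mulVec_smul] }
  let f2 : (Fin r → ℝ) →ₗ[ℝ] (Fin (r - 1 - (i : ℕ)) → ℝ) :=
    { toFun := fun x p => (star V *ᵥ x) (π ⟨(i : ℕ) + 1 + (p : ℕ), by have := p.isLt; omega⟩)
      map_add' := by intro x y; funext p; simp [Matrix.mulVec_add]
      map_smul' := by intro c x; funext p; simp [Matrix.mulVec_smul] }
  obtain ⟨x, hx0, hxf1, hxf2⟩ : ∃ x : Fin r → ℝ, x ≠ 0 ∧ f1 x = 0 ∧ f2 x = 0 := by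
    by_contra hcon
    push_neg at hcon
    have hker : LinearMap.ker (f1.prod f2) = ⊥ := by
      rw [LinearMap.ker_eq_bot']
      intro x hx
      rw [LinearMap.prod_apply, Prod.mk_eq_zero] at hx
      by_contra hx0
      exact absurd hx.2 ((hcon x hx0) hx.1)
    have hinj : Function.Injective (f1.prod f2) := LinearMap.ker_eq_bot.mp hker
    have hle := LinearMap.finrank_le_finrank_of_injective hinj
    simp only [Module.finrank_prod, Module.finrank_pi, Fintype.card_fin] at hle
    omega
  -- C *ᵥ x vanishes above q
  have hCx0 : ∀ l : Fin n, (q : ℕ) < (l : ℕ) → (C *ᵥ x) l = 0 := by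
    intro l hl
    rcases lt_or_ge (l : ℕ) m2 with hlm | hlm
    · have hp : (l : ℕ) - (m2 - 1 - (i : ℕ)) - 1 < (i : ℕ) := by simp only [hq] at hl; omega
      have hl' : (⟨m2 - 1 - (i : ℕ) + 1 + ((l : ℕ) - (m2 - 1 - (i : ℕ)) - 1), by omega⟩ : Fin n) = l := by
        apply Fin.ext; simp only [hq] at hl; simp; omega
      have := congrFun hxf1 ⟨(l : ℕ) - (m2 - 1 - (i : ℕ)) - 1, hp⟩
      simpa [f1, hl'] using this
    · simp only [Matrix.mulVec, dotProduct]
      exact Finset.sum_eq_zero fun j _ => by rw [hsup l j hlm, zero_mul]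
  set c : Fin r → ℝ := star V *ᵥ x with hc
  have hc0 : ∀ p : Fin r, (i : ℕ) < (p : ℕ) → c (π p) = 0 := by
    intro p hp
    have hp' : (p : ℕ) - (i : ℕ) - 1 < r - 1 - (i : ℕ) := by have := p.isLt; omega
    have hpe : (⟨(i : ℕ) + 1 + ((p : ℕ) - (i : ℕ) - 1), by omega⟩ : Fin r) = p := by
      apply Fin.ext; simp; omega
    have := congrFun hxf2 ⟨(p : ℕ) - (i : ℕ) - 1, hp'⟩
    simpa [f2, hpe] using this
  -- key dot-product identities
  have hcvm : c = x ᵥ* V := by rw [hc, hsV, Matrix.mulVec_transpose]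
  have hnorm : c ⬝ᵥ c = x ⬝ᵥ x := by
    nth_rewrite 1 [hcvm]
    nth_rewrite 1 [hc]
    rw [Matrix.dotProduct_mulVec, Matrix.vecMul_vecMul, hV2, Matrix.vecMul_one]
  have hxMx1 : x ⬝ᵥ (M *ᵥ x) = ∑ p, lam p * c p ^ 2 := by
    conv_lhs => rw [hspec]
    rw [← Matrix.mulVec_mulVec, ← Matrix.mulVec_mulVec, Matrix.dotProduct_mulVec, ← hcvm, ← hc]
    simp only [Matrix.mulVec_diagonal, dotProduct]
    exact Finset.sum_congr rfl fun p _ => by ring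
  have hxMx2 : x ⬝ᵥ (M *ᵥ x) = ∑ l, d l * (C *ᵥ x) l ^ 2 := by
    rw [hMdef, ← Matrix.mulVec_mulVec, ← Matrix.mulVec_mulVec, Matrix.dotProduct_mulVec,
      Matrix.vecMul_transpose]
    simp only [Matrix.mulVec_diagonal, dotProduct]
    exact Finset.sum_congr rfl fun l _ => by ring
  have hCxnorm : ∑ l, (C *ᵥ x) l ^ 2 = x ⬝ᵥ x := by
    have h1 : (C *ᵥ x) ⬝ᵥ (C *ᵥ x) = x ⬝ᵥ x := by
      rw [Matrix.dotProduct_mulVec, ← Matrix.mulVec_transpose, Matrix.mulVec_mulVec, hC,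
        Matrix.one_mulVec]
    rw [← h1, dotProduct]
    exact Finset.sum_congr rfl fun l _ => pow_two _
  -- lower bound
  have hlow : d q * (x ⬝ᵥ x) ≤ x ⬝ᵥ (M *ᵥ x) := by
    rw [hxMx2, ← hCxnorm, Finset.mul_sum]
    refine Finset.sum_le_sum fun l _ => ?_
    rcases le_or_gt (l : ℕ) (q : ℕ) with hlq | hlq
    · exact mul_le_mul_of_nonneg_right (hd (by exact hlq)) (sq_nonneg _)
    · rw [hCx0 l hlq]; simp
  -- upper bound
  have hup : x ⬝ᵥ (M *ᵥ x) ≤ lam (π i) * (x ⬝ᵥ x) := by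
    rw [hxMx1, ← hnorm]
    have hre : ∑ p, lam p * c p ^ 2 = ∑ p, lam (π p) * c (π p) ^ 2 :=
      (Equiv.sum_comp π (fun p => lam p * c p ^ 2)).symm
    have hre2 : c ⬝ᵥ c = ∑ p, c (π p) ^ 2 := by
      rw [dotProduct, ← Equiv.sum_comp π (fun p => c p * c p)]
      exact Finset.sum_congr rfl fun p _ => (pow_two _).symm
    rw [hre, hre2, Finset.mul_sum]
    refine Finset.sum_le_sum fun p _ => ?_
    rcases le_or_gt (p : ℕ) (i : ℕ) with hpi | hpi
    · exact mul_le_mul_of_nonneg_right (hμ (by exact hpi)) (sq_nonneg _)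
    · rw [hc0 p hpi]; simp
  have hxx : 0 < x ⬝ᵥ x := by
    obtain ⟨p, hp⟩ := Function.ne_iff.mp hx0
    rw [dotProduct]
    exact Finset.sum_pos' (fun l _ => mul_self_nonneg _) ⟨p, Finset.mem_univ p, mul_self_pos.mpr hp⟩
  have := le_trans hlow hup
  exact le_of_mul_le_mul_right this hxx

private lemma poincare_sum {r n m2 : ℕ} (hrm : r ≤ m2) (hm : m2 ≤ n)
    (d : Fin n → ℝ) (hd : Antitone d) (hd0 : ∀ l, 0 ≤ d l)
    (C : Matrix (Fin n) (Fin r) ℝ) (hC : Cᵀ * C = 1)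
    (hsup : ∀ (l : Fin n) (j : Fin r), m2 ≤ (l : ℕ) → C l j = 0) :
    ∑ l ∈ Finset.univ.filter (fun l : Fin n => m2 - r ≤ (l : ℕ) ∧ (l : ℕ) < m2), d l ^ 2
      ≤ ∑ i, ∑ j, (Cᵀ * Matrix.diagonal d * C) i j ^ 2 := by
  have hM : (Cᵀ * Matrix.diagonal d * C).IsHermitian := by
    unfold Matrix.IsHermitian
    rw [Matrix.conjTranspose_eq_transpose_of_trivial, Matrix.transpose_mul, Matrix.transpose_mul,
      Matrix.transpose_transpose, Matrix.diagonal_transpose, Matrix.mul_assoc]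
  set lam := hM.eigenvalues with hlam
  set π := Tuple.sort lam with hπ
  have step1 : ∑ l ∈ Finset.univ.filter (fun l : Fin n => m2 - r ≤ (l : ℕ) ∧ (l : ℕ) < m2), d l ^ 2
      = ∑ i : Fin r, d ⟨m2 - 1 - (i : ℕ), by omega⟩ ^ 2 := by
    refine Finset.sum_bij' (fun l hl => (⟨m2 - 1 - (l : ℕ), by
        simp only [Finset.mem_filter] at hl; omega⟩ : Fin r))
      (fun i _ => (⟨m2 - 1 - (i : ℕ), by have := i.isLt; omega⟩ : Fin n)) ?_ ?_ ?_ ?_ ?_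
    · intro a ha; exact Finset.mem_univ _
    · intro i _
      simp only [Finset.mem_filter]
      have := i.isLt
      refine ⟨Finset.mem_univ _, ?_, ?_⟩
      · show m2 - r ≤ m2 - 1 - (i : ℕ); omega
      · show m2 - 1 - (i : ℕ) < m2; omega
    · intro l hl
      simp only [Finset.mem_filter] at hl
      apply Fin.ext; simp only [Fin.val_mk]; omega
    · intro i _
      apply Fin.ext; simp only [Fin.val_mk]; have := i.isLt; omega
    · intro l hl
      simp only [Finset.mem_filter] at hl
      have he : ((⟨m2 - 1 - (m2 - 1 - (l : ℕ)), by omega⟩ : Fin n)) = l :=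
        Fin.ext (by simp only [Fin.val_mk]; omega)
      exact (congrArg (fun t => d t ^ 2) he).symm
  rw [step1, frob_eig' _ hM]
  have step2 : ∑ i : Fin r, d ⟨m2 - 1 - (i : ℕ), by omega⟩ ^ 2 ≤ ∑ i : Fin r, lam (π i) ^ 2 := by
    refine Finset.sum_le_sum fun i _ => ?_
    have hk := poincare_key hrm hm d hd hd0 C hC hsup hM i
    exact pow_le_pow_left₀ (hd0 _) hk 2
  calc ∑ i : Fin r, d ⟨m2 - 1 - (i : ℕ), by omega⟩ ^ 2 ≤ ∑ i : Fin r, lam (π i) ^ 2 := step2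
    _ = ∑ p, lam p ^ 2 := Equiv.sum_comp π (fun p => lam p ^ 2)


/-- Poincaré separation applied within the middle eigenblock. -/
theorem stmt13 {n : ℕ} (m1 k m2 : ℕ) (h1 : m1 ≤ k) (h2 : k ≤ m2) (h3 : m2 ≤ n)
    (A : Matrix (Fin n) (Fin n) ℝ)
    (σ : Fin n → ℝ) (u : Fin n → Fin n → ℝ)
    (hσ : Antitone σ) (hσ0 : ∀ l, 0 ≤ σ l)
    (hu : ∀ a b, u a ⬝ᵥ u b = if a = b then (1 : ℝ) else 0)
    (hAd : A = ∑ l, σ l • Matrix.vecMulVec (u l) (u l))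
    (W : Matrix (Fin n) (Fin (k - m1)) ℝ) (hW : Wᵀ * W = 1)
    (hrange : ∀ b : Fin (k - m1), (fun a => W a b) ∈
      Submodule.span ℝ {x : Fin n → ℝ | ∃ l : Fin n, m1 ≤ (l : ℕ) ∧ (l : ℕ) < m2 ∧ x = u l}) :
    (∑ l ∈ Finset.univ.filter (fun l : Fin n => m1 + m2 - k ≤ (l : ℕ) ∧ (l : ℕ) < m2),
        σ l ^ 2) ≤ frobNorm (Wᵀ * A * W) ^ 2 := by
  have hfr : frobNorm (Wᵀ * A * W) ^ 2 = ∑ i, ∑ j, (Wᵀ * A * W) i j ^ 2 := by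
    rw [frobNorm, Real.sq_sqrt]
    positivity
  set U : Matrix (Fin n) (Fin n) ℝ := Matrix.of u with hU
  have hUU : U * Uᵀ = 1 := by
    ext a b
    simpa [Matrix.mul_apply, Matrix.one_apply, dotProduct, hU] using hu a b
  have hUcol : Uᵀ * U = 1 := by rwa [mul_eq_one_comm] at hUU
  have hA' : A = Uᵀ * Matrix.diagonal σ * U := by
    rw [hAd, Matrix.mul_assoc]; ext a b
    simp only [Matrix.sum_apply, Matrix.smul_apply, Matrix.vecMulVec_apply, smul_eq_mul,
      Matrix.mul_apply, Matrix.diagonal_apply, ite_mul, zero_mul, Finset.sum_ite_eq,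
      Finset.mem_univ, if_true, Matrix.transpose_apply, Matrix.of_apply, hU]
    exact Finset.sum_congr rfl fun l _ => by ring
  set C : Matrix (Fin n) (Fin (k - m1)) ℝ := U * W with hCdef
  have hCC : Cᵀ * C = 1 := by
    rw [hCdef, Matrix.transpose_mul, Matrix.mul_assoc, ← Matrix.mul_assoc Uᵀ, hUcol,
      Matrix.one_mul, hW]
  have hsupC : ∀ (l : Fin n) (j : Fin (k - m1)), m2 ≤ (l : ℕ) → C l j = 0 := by
    intro l j hl
    have hCval : C l j = u l ⬝ᵥ (fun a => W a j) := by
      simp [hCdef, Matrix.mul_apply, dotProduct, hU]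
    rw [hCval]
    refine Submodule.span_induction ?_ ?_ ?_ ?_ (hrange j)
    · rintro v ⟨p, hp1, hp2, rfl⟩
      have : l ≠ p := by intro h; subst h; omega
      simpa [this] using hu l p
    · exact dotProduct_zero _
    · intro a b _ _ ha hb
      rw [dotProduct_add, ha, hb, add_zero]
    · intro c a _ ha
      rw [dotProduct_smul, ha, smul_zero]
  have hWAW : Wᵀ * A * W = Cᵀ * Matrix.diagonal σ * C := by
    rw [hA', hCdef, Matrix.transpose_mul]
    simp only [Matrix.mul_assoc]
  rw [hfr, hWAW]
  have hidx : m1 + m2 - k = m2 - (k - m1) := by omega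
  rw [hidx]
  exact poincare_sum (by omega) h3 σ hσ hσ0 C hCC hsupC
end

section
/- Let A, Â be n×n symmetric matrices with A PSD, ‖Â − A‖₂ ≤ ε²σ_{k+1}(A) for ε ∈ (0,1). Let U_{m_1} be the eigenvectors of A for eigenvalues ≥ (1+2ε)σ_{k+1}(A), and let Û_{n−k} be the eigenvectors of Â for its eigenvalues below its top k. Then ‖Û_{n−k}ᵀ U_{m_1}‖₂ ≤ ε. -/
open Matrix

lemma spec_mulVec {n : ℕ} (σ : Fin n → ℝ) (u : Fin n → Fin n → ℝ) (x : Fin n → ℝ) (i : Fin n) :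
    ((∑ l, σ l • Matrix.vecMulVec (u l) (u l)) *ᵥ x) i = ∑ l, σ l * ((u l ⬝ᵥ x) * u l i) := by
  simp only [Matrix.mulVec, dotProduct, Matrix.sum_apply, Matrix.smul_apply,
    Matrix.vecMulVec_apply, smul_eq_mul, Finset.sum_mul, Finset.mul_sum]
  rw [Finset.sum_comm]
  exact Finset.sum_congr rfl fun l _ => Finset.sum_congr rfl fun j _ => by ring

lemma quadForm {n : ℕ} (σ : Fin n → ℝ) (u : Fin n → Fin n → ℝ) (z x : Fin n → ℝ) :
    z ⬝ᵥ (∑ l, σ l • Matrix.vecMulVec (u l) (u l)) *ᵥ x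
      = ∑ l, σ l * ((u l ⬝ᵥ z) * (u l ⬝ᵥ x)) := by
  calc z ⬝ᵥ (∑ l, σ l • Matrix.vecMulVec (u l) (u l)) *ᵥ x
      = ∑ i, ∑ l, z i * (σ l * ((u l ⬝ᵥ x) * u l i)) := by
        simp only [dotProduct, spec_mulVec, Finset.mul_sum]
    _ = ∑ l, ∑ i, z i * (σ l * ((u l ⬝ᵥ x) * u l i)) := Finset.sum_comm
    _ = ∑ l, σ l * ((u l ⬝ᵥ z) * (u l ⬝ᵥ x)) := by
        refine Finset.sum_congr rfl fun l _ => ?_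
        rw [show (u l ⬝ᵥ z) = ∑ i, u l i * z i from rfl, Finset.sum_mul, Finset.mul_sum]
        exact Finset.sum_congr rfl fun i _ => by ring

lemma ortho_expand {m : ℕ} (b : Fin m → Fin m → ℝ)
    (hb : ∀ i j, b i ⬝ᵥ b j = if i = j then (1:ℝ) else 0) (x : Fin m → ℝ) (j : Fin m) :
    x j = ∑ i, (b i ⬝ᵥ x) * b i j := by
  classical
  set B : Matrix (Fin m) (Fin m) ℝ := Matrix.of b with hB
  have h1 : B * Bᵀ = 1 := by
    ext i j
    simpa [Matrix.mul_apply, Matrix.one_apply, dotProduct, hB] using hb i j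
  have h2 : Bᵀ * B = 1 := mul_eq_one_comm.mp h1
  have h3 := congrArg (fun M => M.mulVec x j) h2
  simp only [Matrix.one_mulVec] at h3
  rw [← h3]
  simp only [Matrix.mulVec, dotProduct, Matrix.mul_apply, Matrix.transpose_apply,
    Finset.sum_mul, Finset.mul_sum, hB, Matrix.of_apply]
  rw [Finset.sum_comm]
  exact Finset.sum_congr rfl fun i _ => Finset.sum_congr rfl fun y _ => by ring

lemma parseval {m : ℕ} (b : Fin m → Fin m → ℝ)
    (hb : ∀ i j, b i ⬝ᵥ b j = if i = j then (1:ℝ) else 0) (x : Fin m → ℝ) :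
    ∑ i, (b i ⬝ᵥ x) ^ 2 = ∑ j, x j ^ 2 := by
  calc ∑ i, (b i ⬝ᵥ x) ^ 2
      = ∑ i, ∑ j, (b i ⬝ᵥ x) * (x j * b i j) := by
        refine Finset.sum_congr rfl fun i _ => ?_
        simp only [sq, dotProduct, Finset.mul_sum]
        exact Finset.sum_congr rfl fun j _ => by ring
    _ = ∑ j, ∑ i, (b i ⬝ᵥ x) * (x j * b i j) := Finset.sum_comm
    _ = ∑ j, x j ^ 2 := by
        refine Finset.sum_congr rfl fun j _ => ?_
        have := ortho_expand b hb x j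
        calc ∑ i, (b i ⬝ᵥ x) * (x j * b i j)
            = x j * ∑ i, (b i ⬝ᵥ x) * b i j := by
              rw [Finset.mul_sum]; exact Finset.sum_congr rfl fun i _ => by ring
          _ = x j ^ 2 := by rw [← this]; ring

lemma sum_dite_emb {n m : ℕ} (hmn : m ≤ n) (f : Fin m → ℝ) :
    ∑ l : Fin n, (if h : (l : ℕ) < m then f ⟨l, h⟩ else 0) = ∑ b : Fin m, f b := by
  have e1 : ∑ b : Fin m, f b
      = ∑ b : Fin m, (if h : (b : ℕ) < m then f ⟨(b : ℕ), h⟩ else 0) := by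
    refine Finset.sum_congr rfl fun b _ => ?_
    rw [dif_pos b.isLt]
  rw [e1, Fin.sum_univ_eq_sum_range (fun i => if h : i < m then f ⟨i, h⟩ else 0) n,
    Fin.sum_univ_eq_sum_range (fun i => if h : i < m then f ⟨i, h⟩ else 0) m]
  symm
  apply Finset.sum_subset (Finset.range_subset_range.mpr hmn)
  intro i _ hi
  rw [Finset.mem_range] at hi
  simp [hi]

lemma dot_sum {m k : ℕ} (v : Fin m → ℝ) (w : Fin k → Fin m → ℝ) :
    v ⬝ᵥ (∑ i, w i) = ∑ i, v ⬝ᵥ w i := by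
  simp only [dotProduct, Finset.sum_apply, Finset.mul_sum]
  exact Finset.sum_comm


lemma specNorm_set_bddAbove {n m : ℕ} (M : Matrix (Fin n) (Fin m) ℝ) :
    BddAbove {r : ℝ | ∃ v : Fin m → ℝ, (∑ j, (v j) ^ 2) = 1 ∧
      r = Real.sqrt (∑ i, (M.mulVec v i) ^ 2)} := by
  refine ⟨Real.sqrt (∑ i, ∑ j, (M i j) ^ 2), ?_⟩
  rintro r ⟨v, hv, rfl⟩
  apply Real.sqrt_le_sqrt
  refine Finset.sum_le_sum fun i _ => ?_
  calc (M.mulVec v i) ^ 2 = (∑ j, M i j * v j) ^ 2 := rfl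
    _ ≤ (∑ j, (M i j) ^ 2) * ∑ j, (v j) ^ 2 := Finset.sum_mul_sq_le_sq_mul_sq _ _ _
    _ = ∑ j, (M i j) ^ 2 := by rw [hv, mul_one]

lemma specNorm_unit_le {n m : ℕ} {M : Matrix (Fin n) (Fin m) ℝ} {e : ℝ}
    (hM : specNorm M ≤ e) {v : Fin m → ℝ} (hv : (∑ j, (v j) ^ 2) = 1) :
    ∑ i, (M.mulVec v i) ^ 2 ≤ e ^ 2 := by
  have h1 : Real.sqrt (∑ i, (M.mulVec v i) ^ 2) ≤ e :=
    le_trans (le_csSup (specNorm_set_bddAbove M) ⟨v, hv, rfl⟩) hM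
  have h0 : (0:ℝ) ≤ ∑ i, (M.mulVec v i) ^ 2 := Finset.sum_nonneg fun i _ => sq_nonneg _
  nlinarith [Real.sq_sqrt h0, Real.sqrt_nonneg (∑ i, (M.mulVec v i) ^ 2)]

lemma specNorm_apply_le {n m : ℕ} {M : Matrix (Fin n) (Fin m) ℝ} {e : ℝ}
    (hM : specNorm M ≤ e) (v : Fin m → ℝ) :
    ∑ i, (M.mulVec v i) ^ 2 ≤ e ^ 2 * ∑ j, (v j) ^ 2 := by
  rcases eq_or_lt_of_le (Finset.sum_nonneg fun j (_ : j ∈ Finset.univ) => sq_nonneg (v j)) with h | h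
  · have hz : ∀ j, v j = 0 := by
      intro j
      have := (Finset.sum_eq_zero_iff_of_nonneg (fun j _ => sq_nonneg (v j))).mp h.symm j
        (Finset.mem_univ j)
      exact (pow_eq_zero_iff two_ne_zero).mp this
    have : v = 0 := funext hz
    subst this
    simp [Matrix.mulVec_zero]
  · set s := Real.sqrt (∑ j, (v j) ^ 2) with hs
    have hs0 : 0 < s := Real.sqrt_pos.mpr h
    have hs2 : s ^ 2 = ∑ j, (v j) ^ 2 := Real.sq_sqrt h.le
    set v' : Fin m → ℝ := fun j => v j / s with hv'
    have hunit : (∑ j, (v' j) ^ 2) = 1 := by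
      simp only [hv', div_pow]
      rw [← Finset.sum_div, ← hs2, div_self (by positivity)]
    have hmv : ∀ i, M.mulVec v i = s * M.mulVec v' i := by
      intro i
      simp only [Matrix.mulVec, dotProduct, hv', Finset.mul_sum]
      exact Finset.sum_congr rfl fun j _ => by field_simp
    have := specNorm_unit_le hM hunit
    calc ∑ i, (M.mulVec v i) ^ 2 = s ^ 2 * ∑ i, (M.mulVec v' i) ^ 2 := by
          rw [Finset.mul_sum]
          exact Finset.sum_congr rfl fun i _ => by rw [hmv i]; ring
      _ ≤ s ^ 2 * e ^ 2 := by nlinarith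
      _ = e ^ 2 * ∑ j, (v j) ^ 2 := by rw [hs2]; ring

lemma exists_ker_s14 {p q : ℕ} (hpq : p < q) (C : Matrix (Fin p) (Fin q) ℝ) :
    ∃ t : Fin q → ℝ, t ≠ 0 ∧ C.mulVec t = 0 := by
  by_contra hcon
  push_neg at hcon
  have hinj : Function.Injective C.mulVecLin := by
    rw [← LinearMap.ker_eq_bot, LinearMap.ker_eq_bot']
    intro t ht
    by_contra htz
    exact hcon t htz (by simpa using ht)
  have := LinearMap.finrank_le_finrank_of_injective hinj
  simp [Module.finrank_fintype_fun_eq_card] at this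
  omega

lemma top_eigen {m : ℕ} (hm : 0 < m) (G : Matrix (Fin m) (Fin m) ℝ) (hG : G.IsHermitian) :
    ∃ (lam : ℝ) (v : Fin m → ℝ), (∑ j, (v j) ^ 2) = 1 ∧ G.mulVec v = lam • v ∧
      ∀ v' : Fin m → ℝ, (∑ j, (v' j) ^ 2) = 1 → v' ⬝ᵥ G.mulVec v' ≤ lam := by
  classical
  have : Nonempty (Fin m) := ⟨⟨0, hm⟩⟩
  set b : Fin m → Fin m → ℝ := fun i => ⇑(hG.eigenvectorBasis i) with hbdef
  have hdot : ∀ i j, b i ⬝ᵥ b j = if i = j then (1:ℝ) else 0 := by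
    intro i j
    have := orthonormal_iff_ite.mp hG.eigenvectorBasis.orthonormal i j
    rw [dotProduct_comm]
    simpa [PiLp.inner_apply, RCLike.inner_apply, dotProduct, hbdef] using this
  obtain ⟨imax, _, hmax⟩ := Finset.exists_max_image Finset.univ hG.eigenvalues
    ⟨Classical.arbitrary (Fin m), Finset.mem_univ _⟩
  refine ⟨hG.eigenvalues imax, b imax, ?_, ?_, ?_⟩
  · have h := hdot imax imax
    simp only [if_pos rfl] at h
    rw [show (∑ j, (b imax j) ^ 2) = b imax ⬝ᵥ b imax from by
      simp [dotProduct, sq], h]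
    simp
  · simpa [hbdef] using hG.mulVec_eigenvectorBasis imax
  · intro v' hv'
    set t : Fin m → ℝ := fun i => b i ⬝ᵥ v' with htdef
    have hexp : v' = ∑ i, t i • b i := by
      funext j
      rw [show v' j = ∑ i, (b i ⬝ᵥ v') * b i j from ortho_expand b hdot v' j]
      simp [htdef, Finset.sum_apply]
    have hGv' : G.mulVec v' = ∑ i, (t i * hG.eigenvalues i) • b i := by
      conv_lhs => rw [hexp]
      rw [show G.mulVec (∑ i, t i • b i) = G.mulVecLin (∑ i, t i • b i) from rfl, map_sum]
      refine Finset.sum_congr rfl fun i _ => ?_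
      rw [_root_.map_smul, Matrix.mulVecLin_apply]
      rw [show G.mulVec (b i) = hG.eigenvalues i • b i by
        simpa [hbdef] using hG.mulVec_eigenvectorBasis i]
      rw [smul_smul]
    calc v' ⬝ᵥ G.mulVec v'
        = ∑ i, (t i * hG.eigenvalues i) * (v' ⬝ᵥ b i) := by
          rw [hGv', dot_sum]
          refine Finset.sum_congr rfl fun i _ => ?_
          rw [dotProduct_smul]
          rfl
      _ = ∑ i, hG.eigenvalues i * (t i) ^ 2 := by
          refine Finset.sum_congr rfl fun i _ => ?_
          rw [show v' ⬝ᵥ b i = t i from (dotProduct_comm _ _)]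
          ring
      _ ≤ ∑ i, hG.eigenvalues imax * (t i) ^ 2 := by
          refine Finset.sum_le_sum fun i _ => ?_
          exact mul_le_mul_of_nonneg_right (hmax i (Finset.mem_univ i)) (sq_nonneg _)
      _ = hG.eigenvalues imax * ∑ i, (t i) ^ 2 := by rw [Finset.mul_sum]
      _ = hG.eigenvalues imax := by
          rw [show (∑ i, (t i) ^ 2) = 1 from by
            simp only [htdef]; rw [parseval b hdot v', hv'], mul_one]

lemma dot_gram {p q : ℕ} (W : Matrix (Fin p) (Fin q) ℝ) (x : Fin q → ℝ) :
    x ⬝ᵥ (Wᴴ * W).mulVec x = ∑ i, (W.mulVec x i) ^ 2 := by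
  rw [← Matrix.mulVec_mulVec]
  calc x ⬝ᵥ Wᴴ.mulVec (W.mulVec x)
      = ∑ b, x b * ∑ a, W a b * W.mulVec x a := by
        refine Finset.sum_congr rfl fun b _ => ?_
        simp only [Matrix.mulVec, dotProduct, Matrix.conjTranspose_apply, star_trivial]
    _ = ∑ a, ∑ b, (W a b * x b) * W.mulVec x a := by
        simp only [Finset.mul_sum]
        rw [Finset.sum_comm]
        exact Finset.sum_congr rfl fun a _ => Finset.sum_congr rfl fun b _ => by ring
    _ = ∑ a, (W.mulVec x a) ^ 2 := by
        refine Finset.sum_congr rfl fun a _ => ?_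
        rw [← Finset.sum_mul]
        rw [show (∑ b, W a b * x b) = W.mulVec x a from rfl]
        ring
lemma dite_sq {P : Prop} [inst : Decidable P] (f : P → ℝ) :
    (if h : P then f h else 0) ^ 2 = if h : P then (f h) ^ 2 else 0 := by
  split <;> simp

set_option maxHeartbeats 1000000 in
theorem stmt14 {n : ℕ} (k : ℕ) (hkn : k < n)
    (ε : ℝ) (hε : ε ∈ Set.Ioo (0 : ℝ) 1)
    (A Ah : Matrix (Fin n) (Fin n) ℝ)
    (σ : Fin n → ℝ) (u : Fin n → Fin n → ℝ)
    (hσ : Antitone σ) (hσ0 : ∀ l, 0 ≤ σ l)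
    (hu : ∀ a b, u a ⬝ᵥ u b = if a = b then (1 : ℝ) else 0)
    (hAd : A = ∑ l, σ l • Matrix.vecMulVec (u l) (u l))
    (σh : Fin n → ℝ) (uh : Fin n → Fin n → ℝ)
    (hσh : Antitone σh)
    (huh : ∀ a b, uh a ⬝ᵥ uh b = if a = b then (1 : ℝ) else 0)
    (hAhd : Ah = ∑ l, σh l • Matrix.vecMulVec (uh l) (uh l))
    (hclose : specNorm (Ah - A) ≤ ε ^ 2 * σ ⟨k, hkn⟩)
    (m1 : ℕ) (hm1k : m1 ≤ k)
    (hm1 : ∀ l : Fin n, (l : ℕ) < m1 ↔ (1 + 2 * ε) * σ ⟨k, hkn⟩ ≤ σ l) :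
    specNorm (Matrix.of fun (a : Fin (n - k)) (b : Fin m1) =>
      uh ⟨k + (a : ℕ), by have := a.isLt; omega⟩ ⬝ᵥ
        u ⟨(b : ℕ), by have := b.isLt; omega⟩) ≤ ε := by
  classical
  obtain ⟨hε0, hε1⟩ := hε
  set σk : ℝ := σ ⟨k, hkn⟩ with hσk
  set e : ℝ := ε ^ 2 * σk with he
  have hσk_pos : 0 < σk := by
    rcases lt_or_eq_of_le (hσ0 ⟨k, hkn⟩) with h | h
    · exact h
    · exfalso
      have h' : σk = 0 := h.symm
      have hlast : ((⟨n - 1, by omega⟩ : Fin n) : ℕ) < m1 := by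
        rw [hm1, h', mul_zero]
        exact hσ0 _
      simp only at hlast
      omega
  have he_pos : 0 < e := by rw [he]; exact mul_pos (pow_pos hε0 2) hσk_pos
  have hm1n : m1 ≤ n := le_trans hm1k (le_of_lt hkn)
  set μ : ℝ := σh ⟨k, hkn⟩ with hμ
  -- ========== Weyl's inequality ==========
  have hWeyl : μ ≤ σk + e := by
    obtain ⟨t, ht0, htC⟩ := exists_ker_s14 (Nat.lt_succ_self k)
      (Matrix.of (fun (l : Fin k) (j : Fin (k + 1)) =>
        u ⟨(l : ℕ), by omega⟩ ⬝ᵥ uh ⟨(j : ℕ), by omega⟩))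
    set y : Fin n → ℝ := fun i => ∑ j : Fin (k + 1), t j * uh ⟨(j : ℕ), by omega⟩ i with hy
    set T : ℝ := ∑ j, t j ^ 2 with hT
    have hT_pos : 0 < T := by
      rcases Function.ne_iff.mp ht0 with ⟨j, hj⟩
      simp only [Pi.zero_apply] at hj
      have h1 : (0:ℝ) < t j ^ 2 := by positivity
      exact lt_of_lt_of_le h1 (Finset.single_le_sum (fun i _ => sq_nonneg (t i))
        (Finset.mem_univ j))
    have hudy : ∀ w : Fin n → Fin n → ℝ, ∀ l : Fin n,
        w l ⬝ᵥ y = ∑ j : Fin (k+1), t j * (w l ⬝ᵥ uh ⟨(j : ℕ), by omega⟩) := by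
      intro w l
      simp only [hy, dotProduct, Finset.mul_sum]
      rw [Finset.sum_comm]
      exact Finset.sum_congr rfl fun j _ => Finset.sum_congr rfl fun i _ => by ring
    have huhy : ∀ l : Fin n, uh l ⬝ᵥ y = if h : (l : ℕ) < k + 1 then t ⟨(l : ℕ), h⟩ else 0 := by
      intro l
      rw [hudy uh l]
      by_cases h : (l : ℕ) < k + 1
      · rw [dif_pos h, Finset.sum_eq_single (⟨(l : ℕ), h⟩ : Fin (k+1))]
        · rw [show uh l ⬝ᵥ uh ⟨(l:ℕ), by omega⟩ = 1 by
            rw [huh, if_pos (by apply Fin.ext; simp)]]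
          ring
        · intro j _ hj
          rw [show uh l ⬝ᵥ uh ⟨(j:ℕ), by omega⟩ = 0 by
            rw [huh, if_neg (by
              intro hcon
              apply hj
              apply Fin.ext
              have := congrArg (fun x : Fin n => (x : ℕ)) hcon
              simpa using this.symm)]]
          ring
        · intro hcon
          exact absurd (Finset.mem_univ _) hcon
      · rw [dif_neg h]
        apply Finset.sum_eq_zero
        intro j _
        rw [show uh l ⬝ᵥ uh ⟨(j:ℕ), by omega⟩ = 0 by
          rw [huh, if_neg (by
            intro hcon
            have := congrArg (fun x : Fin n => (x : ℕ)) hcon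
            simp only at this
            omega)]]
        ring
    have hsum_t : ∑ l : Fin n, (uh l ⬝ᵥ y) ^ 2 = T := by
      rw [show ∑ l : Fin n, (uh l ⬝ᵥ y) ^ 2
          = ∑ l : Fin n, (if h : (l : ℕ) < k + 1 then t ⟨(l:ℕ), h⟩ ^ 2 else 0) from
        Finset.sum_congr rfl fun l _ => by rw [huhy l, dite_sq]]
      exact sum_dite_emb (by omega) (fun j : Fin (k+1) => t j ^ 2)
    have hyy : ∑ i, y i ^ 2 = T := by rw [← parseval uh huh y, hsum_t]
    have huy : ∀ l : Fin n, (l : ℕ) < k → u l ⬝ᵥ y = 0 := by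
      intro l hl
      have h0 := congrFun htC ⟨(l : ℕ), hl⟩
      simp only [Matrix.mulVec, Pi.zero_apply] at h0
      rw [hudy u l, ← h0]
      simp only [dotProduct, Matrix.of_apply, Fin.eta]
      exact Finset.sum_congr rfl fun j _ => by ring
    have hAhy : μ * T ≤ y ⬝ᵥ Ah.mulVec y := by
      rw [hAhd, quadForm]
      calc μ * T = ∑ l : Fin n, μ * (uh l ⬝ᵥ y) ^ 2 := by rw [← Finset.mul_sum, hsum_t]
        _ ≤ ∑ l : Fin n, σh l * ((uh l ⬝ᵥ y) * (uh l ⬝ᵥ y)) := by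
            refine Finset.sum_le_sum fun l _ => ?_
            rw [show σh l * ((uh l ⬝ᵥ y) * (uh l ⬝ᵥ y)) = σh l * (uh l ⬝ᵥ y) ^ 2 by ring]
            by_cases h : (l : ℕ) < k + 1
            · have : μ ≤ σh l := hσh (by rw [Fin.le_def]; simp; omega)
              exact mul_le_mul_of_nonneg_right this (sq_nonneg _)
            · rw [huhy l, dif_neg h]
              norm_num
    have hAy : y ⬝ᵥ A.mulVec y ≤ σk * T := by
      rw [hAd, quadForm]
      calc ∑ l : Fin n, σ l * ((u l ⬝ᵥ y) * (u l ⬝ᵥ y))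
          ≤ ∑ l : Fin n, σk * (u l ⬝ᵥ y) ^ 2 := by
            refine Finset.sum_le_sum fun l _ => ?_
            rw [show σ l * ((u l ⬝ᵥ y) * (u l ⬝ᵥ y)) = σ l * (u l ⬝ᵥ y) ^ 2 by ring]
            by_cases h : (l : ℕ) < k
            · rw [huy l h]
              norm_num
            · have : σ l ≤ σk := hσ (by rw [Fin.le_def]; simp; omega)
              exact mul_le_mul_of_nonneg_right this (sq_nonneg _)
        _ = σk * T := by rw [← Finset.mul_sum, parseval u hu y, hyy]
    have hEy : y ⬝ᵥ (Ah - A).mulVec y ≤ e * T := by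
      have hEsq : ∑ i, ((Ah - A).mulVec y i) ^ 2 ≤ e ^ 2 * T := by
        have h5 := specNorm_apply_le hclose y
        rwa [hyy] at h5
      have hcs := Finset.sum_mul_sq_le_sq_mul_sq Finset.univ y ((Ah - A).mulVec y)
      rw [hyy] at hcs
      have hdot : y ⬝ᵥ (Ah - A).mulVec y = ∑ i, y i * (Ah - A).mulVec y i := rfl
      rw [hdot]
      nlinarith [hcs, hEsq, hT_pos, he_pos, mul_pos he_pos hT_pos,
        Finset.sum_nonneg fun i (_ : i ∈ Finset.univ) => sq_nonneg (((Ah - A).mulVec y) i)]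
    have hsplit : y ⬝ᵥ Ah.mulVec y = y ⬝ᵥ A.mulVec y + y ⬝ᵥ (Ah - A).mulVec y := by
      rw [Matrix.sub_mulVec, dotProduct_sub]
      ring
    nlinarith
  -- ========== main part ==========
  set W : Matrix (Fin (n - k)) (Fin m1) ℝ :=
    Matrix.of (fun (a : Fin (n - k)) (b : Fin m1) =>
      uh ⟨k + (a : ℕ), by have := a.isLt; omega⟩ ⬝ᵥ u ⟨(b : ℕ), by have := b.isLt; omega⟩) with hWdef
  show specNorm W ≤ ε
  apply Real.sSup_le
  · rintro r ⟨v', hv', rfl⟩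
    -- m1 is positive
    have hm1_pos : 0 < m1 := by
      by_contra hcon
      push_neg at hcon
      interval_cases m1
      simp at hv'
    -- Gram matrix and its top eigenvector
    set G : Matrix (Fin m1) (Fin m1) ℝ := Wᴴ * W with hG
    obtain ⟨lam, v, hvunit, hveig, hray⟩ := top_eigen hm1_pos G
      (Matrix.isHermitian_conjTranspose_mul_self W)
    have hvv : v ⬝ᵥ v = 1 := by
      rw [show v ⬝ᵥ v = ∑ j, v j ^ 2 from Finset.sum_congr rfl fun j _ => (sq (v j)).symm]
      exact hvunit
    have hlam : lam = ∑ i, (W.mulVec v i) ^ 2 := by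
      rw [← dot_gram W v, ← hG, hveig, dotProduct_smul, hvv]
      simp
    have hlam0 : 0 ≤ lam := by
      rw [hlam]
      exact Finset.sum_nonneg fun i _ => sq_nonneg _
    -- the vectors x, c, z
    set x : Fin n → ℝ := fun i => ∑ b : Fin m1, v b * u ⟨(b : ℕ), by omega⟩ i with hx
    set c : Fin n → ℝ := fun j => uh j ⬝ᵥ x with hc
    set z : Fin n → ℝ := fun i =>
      ∑ a : Fin (n - k), c ⟨k + (a : ℕ), by have := a.isLt; omega⟩ *
        uh ⟨k + (a : ℕ), by have := a.isLt; omega⟩ i with hz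
    -- dot products with x
    have hudx : ∀ w : Fin n → Fin n → ℝ, ∀ l : Fin n,
        w l ⬝ᵥ x = ∑ b : Fin m1, v b * (w l ⬝ᵥ u ⟨(b : ℕ), by omega⟩) := by
      intro w l
      simp only [hx, dotProduct, Finset.mul_sum]
      rw [Finset.sum_comm]
      exact Finset.sum_congr rfl fun b _ => Finset.sum_congr rfl fun i _ => by ring
    have hux : ∀ l : Fin n, u l ⬝ᵥ x = if h : (l : ℕ) < m1 then v ⟨(l : ℕ), h⟩ else 0 := by
      intro l
      rw [hudx u l]
      by_cases h : (l : ℕ) < m1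
      · rw [dif_pos h, Finset.sum_eq_single (⟨(l : ℕ), h⟩ : Fin m1)]
        · rw [show u l ⬝ᵥ u ⟨(l:ℕ), by omega⟩ = 1 by
            rw [hu, if_pos (by apply Fin.ext; simp)]]
          ring
        · intro b _ hb
          rw [show u l ⬝ᵥ u ⟨(b:ℕ), by omega⟩ = 0 by
            rw [hu, if_neg (by
              intro hcon
              apply hb
              apply Fin.ext
              have := congrArg (fun q : Fin n => (q : ℕ)) hcon
              simpa using this.symm)]]
          ring
        · intro hcon
          exact absurd (Finset.mem_univ _) hcon
      · rw [dif_neg h]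
        apply Finset.sum_eq_zero
        intro b _
        rw [show u l ⬝ᵥ u ⟨(b:ℕ), by omega⟩ = 0 by
          rw [hu, if_neg (by
            intro hcon
            have := congrArg (fun q : Fin n => (q : ℕ)) hcon
            simp only at this
            omega)]]
        ring
    have hxx : ∑ i, x i ^ 2 = 1 := by
      rw [← parseval u hu x]
      rw [show ∑ l : Fin n, (u l ⬝ᵥ x) ^ 2
          = ∑ l : Fin n, (if h : (l : ℕ) < m1 then v ⟨(l:ℕ), h⟩ ^ 2 else 0) from
        Finset.sum_congr rfl fun l _ => by rw [hux l, dite_sq]]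
      rw [sum_dite_emb hm1n (fun b : Fin m1 => v b ^ 2)]
      exact hvunit
    -- W applied to v
    have hWv : ∀ a : Fin (n - k), W.mulVec v a = c ⟨k + (a : ℕ), by have := a.isLt; omega⟩ := by
      intro a
      calc W.mulVec v a
          = ∑ b : Fin m1, (uh ⟨k + (a : ℕ), by have := a.isLt; omega⟩ ⬝ᵥ
              u ⟨(b : ℕ), by omega⟩) * v b := rfl
        _ = ∑ b : Fin m1, v b * (uh ⟨k + (a : ℕ), by have := a.isLt; omega⟩ ⬝ᵥ
              u ⟨(b : ℕ), by omega⟩) := Finset.sum_congr rfl fun b _ => mul_comm _ _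
        _ = c ⟨k + (a : ℕ), by have := a.isLt; omega⟩ :=
            (hudx uh ⟨k + (a : ℕ), by have := a.isLt; omega⟩).symm
    have hlamc : lam = ∑ a : Fin (n - k), c ⟨k + (a : ℕ), by have := a.isLt; omega⟩ ^ 2 := by
      rw [hlam]
      exact Finset.sum_congr rfl fun a _ => by rw [hWv a]
    -- dot products with z
    have hudz : ∀ w : Fin n → Fin n → ℝ, ∀ l : Fin n,
        w l ⬝ᵥ z = ∑ a : Fin (n - k), c ⟨k + (a : ℕ), by have := a.isLt; omega⟩ *
          (w l ⬝ᵥ uh ⟨k + (a : ℕ), by have := a.isLt; omega⟩) := by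
      intro w l
      simp only [hz, dotProduct, Finset.mul_sum]
      rw [Finset.sum_comm]
      exact Finset.sum_congr rfl fun a _ => Finset.sum_congr rfl fun i _ => by ring
    have huhz : ∀ l : Fin n, uh l ⬝ᵥ z = if k ≤ (l : ℕ) then c l else 0 := by
      intro l
      rw [hudz uh l]
      by_cases h : k ≤ (l : ℕ)
      · rw [if_pos h]
        have hlk : (l : ℕ) - k < n - k := by omega
        rw [Finset.sum_eq_single (⟨(l : ℕ) - k, hlk⟩ : Fin (n - k))]
        · rw [show uh l ⬝ᵥ uh ⟨k + ((⟨(l : ℕ) - k, hlk⟩ : Fin (n-k)) : ℕ), by omega⟩ = 1 by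
            rw [huh, if_pos (by apply Fin.ext; simp; omega)]]
          rw [show (⟨k + ((⟨(l : ℕ) - k, hlk⟩ : Fin (n-k)) : ℕ), by omega⟩ : Fin n) = l by
            apply Fin.ext; simp; omega]
          ring
        · intro a _ ha
          rw [show uh l ⬝ᵥ uh ⟨k + (a : ℕ), by omega⟩ = 0 by
            rw [huh, if_neg (by
              intro hcon
              apply ha
              apply Fin.ext
              have := congrArg (fun q : Fin n => (q : ℕ)) hcon
              simp only at this
              simp
              omega)]]
          ring
        · intro hcon
          exact absurd (Finset.mem_univ _) hcon
      · rw [if_neg h]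
        apply Finset.sum_eq_zero
        intro a _
        rw [show uh l ⬝ᵥ uh ⟨k + (a : ℕ), by omega⟩ = 0 by
          rw [huh, if_neg (by
            intro hcon
            have := congrArg (fun q : Fin n => (q : ℕ)) hcon
            simp only at this
            omega)]]
        ring
    have hzz : ∑ i, z i ^ 2 = lam := by
      have h1 : ∑ i, z i ^ 2 = z ⬝ᵥ z := Finset.sum_congr rfl fun i _ => sq (z i)
      have h2 := hudz (fun _ => z) ⟨k, hkn⟩
      simp only at h2
      rw [h1, h2, hlamc]
      refine Finset.sum_congr rfl fun a _ => ?_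
      rw [dotProduct_comm, huhz, if_pos (by simp)]
      ring
    have hsum_uhz : ∑ l : Fin n, (uh l ⬝ᵥ z) ^ 2 = lam := by
      rw [parseval uh huh z, hzz]
    -- key eigenvector identity
    have hzu : ∀ (l : Fin n) (h : (l : ℕ) < m1), u l ⬝ᵥ z = lam * v ⟨(l : ℕ), h⟩ := by
      intro l h
      have h0 := congrFun hveig (⟨(l : ℕ), h⟩ : Fin m1)
      have h1 : G.mulVec v (⟨(l : ℕ), h⟩ : Fin m1)
          = ∑ a : Fin (n - k), W a ⟨(l : ℕ), h⟩ * W.mulVec v a := by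
        rw [hG, ← Matrix.mulVec_mulVec]
        simp only [Matrix.mulVec, dotProduct, Matrix.conjTranspose_apply, star_trivial]
      rw [h1] at h0
      simp only [Pi.smul_apply, smul_eq_mul] at h0
      rw [hudz u l, ← h0]
      refine Finset.sum_congr rfl fun a _ => ?_
      rw [hWv a]
      rw [show W a ⟨(l : ℕ), h⟩
          = uh ⟨k + (a : ℕ), by have := a.isLt; omega⟩ ⬝ᵥ u ⟨(l : ℕ), by omega⟩ from rfl]
      rw [show u l ⬝ᵥ uh ⟨k + (a : ℕ), by have := a.isLt; omega⟩
          = uh ⟨k + (a : ℕ), by have := a.isLt; omega⟩ ⬝ᵥ u l from dotProduct_comm _ _]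
      rw [show u ⟨(l : ℕ), by omega⟩ = u l by congr 1]
      ring
    -- quadratic form bounds
    have hAhx : z ⬝ᵥ Ah.mulVec x ≤ μ * lam := by
      rw [hAhd, quadForm]
      calc ∑ l : Fin n, σh l * ((uh l ⬝ᵥ z) * (uh l ⬝ᵥ x))
          ≤ ∑ l : Fin n, μ * (uh l ⬝ᵥ z) ^ 2 := by
            refine Finset.sum_le_sum fun l _ => ?_
            by_cases h : k ≤ (l : ℕ)
            · have hcl : uh l ⬝ᵥ z = uh l ⬝ᵥ x := by
                rw [huhz l, if_pos h, hc]
              rw [← hcl]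
              have hσhl : σh l ≤ μ := hσh (by rw [Fin.le_def]; simp; omega)
              rw [show σh l * ((uh l ⬝ᵥ z) * (uh l ⬝ᵥ z)) = σh l * (uh l ⬝ᵥ z) ^ 2 by ring]
              exact mul_le_mul_of_nonneg_right hσhl (sq_nonneg _)
            · rw [huhz l, if_neg h]
              norm_num
        _ = μ * lam := by rw [← Finset.mul_sum, hsum_uhz]
    have hAx : (1 + 2 * ε) * σk * lam ≤ z ⬝ᵥ A.mulVec x := by
      rw [hAd, quadForm]
      have hgl : (1 + 2 * ε) * σk * lam = ∑ l : Fin n,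
          (if h : (l : ℕ) < m1 then (1 + 2 * ε) * σk * lam * v ⟨(l : ℕ), h⟩ ^ 2 else 0) := by
        rw [show (∑ l : Fin n,
            (if h : (l : ℕ) < m1 then (1 + 2 * ε) * σk * lam * v ⟨(l : ℕ), h⟩ ^ 2 else 0))
            = ∑ b : Fin m1, (1 + 2 * ε) * σk * lam * v b ^ 2 from
          sum_dite_emb hm1n (fun b : Fin m1 => (1 + 2 * ε) * σk * lam * v b ^ 2)]
        rw [← Finset.mul_sum, hvunit, mul_one]
      rw [hgl]
      refine Finset.sum_le_sum fun l _ => ?_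
      by_cases h : (l : ℕ) < m1
      · rw [dif_pos h, hux l, dif_pos h, hzu l h]
        have hσl : (1 + 2 * ε) * σk ≤ σ l := (hm1 l).mp h
        nlinarith [sq_nonneg (v ⟨(l : ℕ), h⟩), mul_nonneg hlam0 (sq_nonneg (v ⟨(l : ℕ), h⟩))]
      · rw [dif_neg h, hux l, dif_neg h, mul_zero, mul_zero]
    -- combine everything
    have hsplit : z ⬝ᵥ Ah.mulVec x = z ⬝ᵥ A.mulVec x + z ⬝ᵥ (Ah - A).mulVec x := by
      rw [Matrix.sub_mulVec, dotProduct_sub]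
      ring
    set s : ℝ := Real.sqrt lam with hs
    have hs0 : 0 ≤ s := Real.sqrt_nonneg _
    have hs2 : s ^ 2 = lam := Real.sq_sqrt hlam0
    have hEx : -(e * s) ≤ z ⬝ᵥ (Ah - A).mulVec x := by
      have hEsq : ∑ i, ((Ah - A).mulVec x i) ^ 2 ≤ e ^ 2 := by
        have h5 := specNorm_apply_le hclose x
        rwa [hxx, mul_one] at h5
      have hcs := Finset.sum_mul_sq_le_sq_mul_sq Finset.univ z ((Ah - A).mulVec x)
      rw [hzz] at hcs
      have hdot : z ⬝ᵥ (Ah - A).mulVec x = ∑ i, z i * (Ah - A).mulVec x i := rfl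
      have h7 : (z ⬝ᵥ (Ah - A).mulVec x) ^ 2 ≤ (e * s) ^ 2 := by
        rw [hdot]
        calc (∑ i, z i * (Ah - A).mulVec x i) ^ 2
            ≤ lam * ∑ i, ((Ah - A).mulVec x i) ^ 2 := hcs
          _ ≤ lam * e ^ 2 := mul_le_mul_of_nonneg_left hEsq hlam0
          _ = (e * s) ^ 2 := by rw [← hs2]; ring
      nlinarith [h7, mul_nonneg he_pos.le hs0]
    have hchain : (1 + 2 * ε) * σk * lam ≤ μ * lam + e * s := by linarith
    have hslε : s ≤ ε := by
      have h6 : (1 + 2 * ε) * σk * s ^ 2 ≤ (σk + e) * s ^ 2 + e * s := by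
        rw [hs2]
        nlinarith [hWeyl, hlam0]
      rw [he] at h6
      by_contra hcon
      push_neg at hcon
      have hsp : 0 < s := lt_trans hε0 hcon
      have hd1 : 0 < s - ε := sub_pos.mpr hcon
      have key : (2 * ε - ε ^ 2) * σk * s * s ≤ ε ^ 2 * σk * s := by nlinarith [h6]
      have key2 : (2 * ε - ε ^ 2) * σk * s ≤ ε ^ 2 * σk :=
        le_of_mul_le_mul_right key hsp
      have h2e : 0 < (2 * ε - ε ^ 2) * σk := mul_pos (by nlinarith) hσk_pos
      nlinarith [key2, mul_pos h2e hd1,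
        mul_pos (mul_pos hσk_pos (mul_pos hε0 hε0)) (sub_pos.mpr hε1)]
    have hr2 : ∑ i, (W.mulVec v' i) ^ 2 ≤ lam := by
      rw [← dot_gram W v']
      exact hray v' hv'
    calc Real.sqrt (∑ i, (W.mulVec v' i) ^ 2) ≤ Real.sqrt lam := Real.sqrt_le_sqrt hr2
      _ ≤ ε := hslε
  · exact le_of_lt hε0
end
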